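/- arXiv:2103.13056 — 6 statements merged into one kernel-verified Lean document; each statement's English description precedes it below -/
import Mathlib

section
/- (Freedman's inequality.) Let (Ω, ℱ, P) be a probability space with a filtration {ℱ_t}_{t≥0}, and let {X_t}_{t≥1} be a real-valued martingale difference sequence adapted to {ℱ_t}, i.e., each X_t is ℱ_t-measurable and E[X_t | ℱ_{t−1}] = 0 almost surely. Suppose |X_t| ≤ R almost surely for all t, for some real R > 0. Then for every T ∈ ℕ, every δ ∈ (0,1), and every η ∈ (0, 1/R), with probability at least 1 − δ it holds that Σ_{t=1}^T X_t ≤ η Σ_{t=1}^T E[X_t² | ℱ_{t−1}] + log(1/δ)/η. -/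
/-!
Put `S_T = ∑_{t ≤ T} X_t`, `V_T = ∑_{t ≤ T} E[X_t² | ℱ_{t-1}]` and `M_T = exp (η S_T - η² V_T)`.
Since `|η X_t| ≤ η R ≤ 1`, the second-order bound `exp x ≤ 1 + x + x²` gives
`E[exp (η X_t) | ℱ_{t-1}] ≤ 1 + η² E[X_t² | ℱ_{t-1}] ≤ exp (η² E[X_t² | ℱ_{t-1}])`, so `M` is a
supermartingale and `E[M_T] ≤ M_0 = 1`. Markov's inequality then bounds `P(M_T ≥ 1/δ)` by `δ`,
and off that event `η S_T - η² V_T < log (1/δ)`.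
-/

open MeasureTheory Finset Real

lemma exp_le_one_add_add_sq {x : ℝ} (hx : |x| ≤ 1) : exp x ≤ 1 + x + x ^ 2 := by
  linarith [le_abs_self (exp x - 1 - x), abs_exp_sub_one_sub_id_le hx]

section CondExp

variable {Ω : Type*} {m m0 : MeasurableSpace Ω} {μ : Measure Ω} [IsFiniteMeasure μ]

lemma integrable_exp_of_ae_le {Y : Ω → ℝ} (hY : AEStronglyMeasurable Y μ) {C : ℝ}
    (hC : ∀ᵐ ω ∂μ, Y ω ≤ C) : Integrable (fun ω => exp (Y ω)) μ :=
  .of_bound (continuous_exp.comp_aestronglyMeasurable hY) (exp C) <| by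
    filter_upwards [hC] with ω h
    simpa using h

lemma integrable_exp_mul_of_abs_le {X : Ω → ℝ} {R η : ℝ} (hX : AEStronglyMeasurable X μ)
    (hbdd : ∀ᵐ ω ∂μ, |X ω| ≤ R) (hη : 0 ≤ η) : Integrable (fun ω => exp (η * X ω)) μ :=
  integrable_exp_of_ae_le (hX.const_mul η) (C := η * R) <| by
    filter_upwards [hbdd] with ω h
    exact mul_le_mul_of_nonneg_left ((le_abs_self _).trans h) hη

lemma condExp_exp_mul_le_exp_condExp_sq (hm : m ≤ m0) {X : Ω → ℝ} {R η : ℝ}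
    (hX : AEStronglyMeasurable X μ) (hbdd : ∀ᵐ ω ∂μ, |X ω| ≤ R) (hη : 0 ≤ η) (hηR : η * R ≤ 1)
    (hmean : μ[X | m] =ᵐ[μ] 0) :
    μ[fun ω => exp (η * X ω) | m] ≤ᵐ[μ] fun ω => exp (η ^ 2 * μ[fun ω => X ω ^ 2 | m] ω) := by
  have hXint : Integrable X μ := .of_bound hX R (by simpa using hbdd)
  have hX2int : Integrable (fun ω => X ω ^ 2) μ := .of_bound (hX.pow 2) (R ^ 2) <| by
    filter_upwards [hbdd] with ω h
    simpa using pow_le_pow_left₀ (abs_nonneg _) h 2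
  have hexp_int := integrable_exp_mul_of_abs_le hX hbdd hη
  have hlin_int : Integrable (fun ω => 1 + η * X ω) μ :=
    (integrable_const 1).add (hXint.const_mul η)
  have hsq_int : Integrable (fun ω => η ^ 2 * X ω ^ 2) μ := hX2int.const_mul (η ^ 2)
  have htaylor : (fun ω => exp (η * X ω)) ≤ᵐ[μ] fun ω => 1 + η * X ω + η ^ 2 * X ω ^ 2 := by
    filter_upwards [hbdd] with ω h
    have hx : |η * X ω| ≤ 1 := by
      rw [abs_mul, abs_of_nonneg hη]
      exact (mul_le_mul_of_nonneg_left h hη).trans hηR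
    simpa only [mul_pow] using exp_le_one_add_add_sq hx
  have hadd : μ[fun ω => 1 + η * X ω + η ^ 2 * X ω ^ 2 | m] =ᵐ[μ]
      μ[fun ω => 1 + η * X ω | m] + μ[fun ω => η ^ 2 * X ω ^ 2 | m] :=
    condExp_add hlin_int hsq_int m
  have hlin : μ[fun ω => 1 + η * X ω | m] =ᵐ[μ]
      μ[fun _ => (1 : ℝ) | m] + μ[fun ω => η * X ω | m] :=
    condExp_add (integrable_const 1) (hXint.const_mul η) m
  have hsmul₁ : μ[fun ω => η * X ω | m] =ᵐ[μ] fun ω => η * μ[X | m] ω := condExp_smul η X m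
  have hsmul₂ : μ[fun ω => η ^ 2 * X ω ^ 2 | m] =ᵐ[μ]
      fun ω => η ^ 2 * μ[fun ω => X ω ^ 2 | m] ω := condExp_smul (η ^ 2) (fun ω => X ω ^ 2) m
  have hmono : μ[fun ω => exp (η * X ω) | m] ≤ᵐ[μ]
      μ[fun ω => 1 + η * X ω + η ^ 2 * X ω ^ 2 | m] :=
    condExp_mono hexp_int (hlin_int.add hsq_int) htaylor
  filter_upwards [hmono, hadd, hlin, hsmul₁, hsmul₂, hmean]
    with ω hmono hadd hlin hsmul₁ hsmul₂ hmean
  simp only [Pi.add_apply, Pi.zero_apply] at hadd hlin hmean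
  rw [hadd, hlin, hsmul₁, hsmul₂, hmean, condExp_const hm] at hmono
  linarith [add_one_le_exp (η ^ 2 * μ[fun ω => X ω ^ 2 | m] ω)]

end CondExp

lemma ofReal_one_sub_le_measure_lt_log_of_integral_exp_le_one {Ω : Type*}
    {m0 : MeasurableSpace Ω} {μ : Measure Ω} [IsProbabilityMeasure μ] {Y : Ω → ℝ}
    (hY : Measurable Y) (hint : Integrable (fun ω => exp (Y ω)) μ)
    (hle : ∫ ω, exp (Y ω) ∂μ ≤ 1) {δ : ℝ} (hδ : 0 < δ) :
    ENNReal.ofReal (1 - δ) ≤ μ {ω | Y ω < log (1 / δ)} := by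
  have hmarkov : 1 / δ * μ.real {ω | 1 / δ ≤ exp (Y ω)} ≤ 1 :=
    (mul_meas_ge_le_integral_of_nonneg (ae_of_all _ fun ω => (exp_pos _).le) hint _).trans hle
  have hsmall : μ {ω | 1 / δ ≤ exp (Y ω)} ≤ ENNReal.ofReal δ := by
    rw [ENNReal.le_ofReal_iff_toReal_le (measure_ne_top _ _) hδ.le, ← measureReal_def]
    rw [one_div, inv_mul_le_iff₀ hδ, mul_one] at hmarkov
    simpa only [one_div] using hmarkov
  have hcompl : {ω | Y ω < log (1 / δ)} = {ω | 1 / δ ≤ exp (Y ω)}ᶜ := by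
    ext ω
    simp only [Set.mem_ofPred_eq, Set.mem_compl_iff, not_le,
      lt_log_iff_exp_lt (one_div_pos.mpr hδ)]
  rw [hcompl, prob_compl_eq_one_sub (measurableSet_le measurable_const hY.exp),
    ENNReal.ofReal_sub _ hδ.le, ENNReal.ofReal_one]
  exact tsub_le_tsub_left hsmall 1

section Freedman

variable {Ω : Type*} {m0 : MeasurableSpace Ω} (P : Measure Ω) (ℱ : Filtration ℕ m0)
  (X : ℕ → Ω → ℝ)

noncomputable def condSqSum (T : ℕ) (ω : Ω) : ℝ :=
  ∑ t ∈ Icc 1 T, P[fun ω' => X t ω' ^ 2 | ℱ (t - 1)] ω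

noncomputable def expSupermartingale (η : ℝ) (T : ℕ) (ω : Ω) : ℝ :=
  exp (η * ∑ t ∈ Icc 1 T, X t ω - η ^ 2 * condSqSum P ℱ X T ω)

variable {P ℱ X}

lemma condSqSum_succ (T : ℕ) (ω : Ω) :
    condSqSum P ℱ X (T + 1) ω = condSqSum P ℱ X T ω + P[fun ω' => X (T + 1) ω' ^ 2 | ℱ T] ω :=
  sum_Icc_succ_top (by omega) _

lemma stronglyMeasurable_condSqSum {n T : ℕ} (hT : T ≤ n + 1) :
    StronglyMeasurable[ℱ n] (condSqSum P ℱ X T) := by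
  unfold condSqSum
  exact stronglyMeasurable_fun_sum _ fun t ht =>
    stronglyMeasurable_condExp.mono (ℱ.mono (by grind))

lemma condSqSum_nonneg (T : ℕ) : 0 ≤ᵐ[P] condSqSum P ℱ X T := by
  have : ∀ᵐ ω ∂P, ∀ t ∈ Icc 1 T, 0 ≤ P[fun ω' => X t ω' ^ 2 | ℱ (t - 1)] ω :=
    (Filter.eventually_all_finset _).mpr fun _ _ =>
      condExp_nonneg (ae_of_all _ fun _ => sq_nonneg _)
  filter_upwards [this] with ω h
  exact sum_nonneg h

variable (hadapt : ∀ t, 1 ≤ t → StronglyMeasurable[ℱ t] (X t))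
include hadapt

lemma stronglyMeasurable_sum_Icc (T : ℕ) :
    StronglyMeasurable[ℱ T] fun ω => ∑ t ∈ Icc 1 T, X t ω :=
  stronglyMeasurable_fun_sum _ fun t ht =>
    (hadapt t (mem_Icc.mp ht).1).mono (ℱ.mono (mem_Icc.mp ht).2)

lemma stronglyMeasurable_exponent (η : ℝ) {T T' : ℕ} (hT' : T' ≤ T + 1) :
    StronglyMeasurable[ℱ T] fun ω => η * ∑ t ∈ Icc 1 T, X t ω - η ^ 2 * condSqSum P ℱ X T' ω :=
  ((stronglyMeasurable_sum_Icc hadapt T).const_mul η).sub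
    ((stronglyMeasurable_condSqSum hT').const_mul (η ^ 2))

lemma stronglyAdapted_expSupermartingale (η : ℝ) :
    StronglyAdapted ℱ (expSupermartingale P ℱ X η) := fun _ =>
  continuous_exp.comp_stronglyMeasurable (stronglyMeasurable_exponent hadapt η (by omega))

variable {R : ℝ} (hbdd : ∀ t, 1 ≤ t → ∀ᵐ ω ∂P, |X t ω| ≤ R) {η : ℝ} (hη : 0 ≤ η)
include hbdd hη

lemma integrable_expSupermartingale [IsFiniteMeasure P] (T : ℕ) :
    Integrable (expSupermartingale P ℱ X η T) P := by
  refine integrable_exp_of_ae_le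
    ((stronglyMeasurable_exponent hadapt η (by omega)).mono (ℱ.le T)).aestronglyMeasurable
    (C := η * (T * R)) ?_
  have hbdd_sum : ∀ᵐ ω ∂P, ∀ t ∈ Icc 1 T, |X t ω| ≤ R :=
    (Filter.eventually_all_finset _).mpr fun t ht => hbdd t (mem_Icc.mp ht).1
  filter_upwards [hbdd_sum, condSqSum_nonneg T] with ω hX hV
  have hS : ∑ t ∈ Icc 1 T, X t ω ≤ T * R := by
    simpa using sum_le_card_nsmul _ _ R fun t ht => (le_abs_self _).trans (hX t ht)
  nlinarith [mul_le_mul_of_nonneg_left hS hη, mul_nonneg (sq_nonneg η) hV]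

lemma condExp_expSupermartingale_succ_le [IsFiniteMeasure P]
    (hmds : ∀ t, 1 ≤ t → P[X t | ℱ (t - 1)] =ᵐ[P] 0) (hηR : η * R ≤ 1) (T : ℕ) :
    P[expSupermartingale P ℱ X η (T + 1) | ℱ T] ≤ᵐ[P] expSupermartingale P ℱ X η T := by
  set f : Ω → ℝ := fun ω => exp (η * ∑ t ∈ Icc 1 T, X t ω - η ^ 2 * condSqSum P ℱ X (T + 1) ω)
  have hf : StronglyMeasurable[ℱ T] f :=
    continuous_exp.comp_stronglyMeasurable (stronglyMeasurable_exponent hadapt η le_rfl)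
  have hsplit : expSupermartingale P ℱ X η (T + 1) = f * fun ω => exp (η * X (T + 1) ω) := by
    funext ω
    simp only [expSupermartingale, f, Pi.mul_apply, ← exp_add,
      sum_Icc_succ_top (by omega : 1 ≤ T + 1)]
    ring_nf
  have hXm : StronglyMeasurable (X (T + 1)) := (hadapt (T + 1) (by omega)).mono (ℱ.le _)
  have hpull := condExp_mul_of_stronglyMeasurable_left (m := ℱ T) hf
    (hsplit ▸ integrable_expSupermartingale hadapt hbdd hη (T + 1))
    (integrable_exp_mul_of_abs_le hXm.aestronglyMeasurable (hbdd (T + 1) (by omega)) hη)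
  rw [hsplit]
  have hstep := condExp_exp_mul_le_exp_condExp_sq (ℱ.le T) hXm.aestronglyMeasurable
    (hbdd (T + 1) (by omega)) hη hηR (hmds (T + 1) (by omega))
  filter_upwards [hpull, hstep] with ω hpull hstep
  rw [hpull, Pi.mul_apply]
  calc f ω * P[fun ω => exp (η * X (T + 1) ω) | ℱ T] ω
      ≤ f ω * exp (η ^ 2 * P[fun ω => X (T + 1) ω ^ 2 | ℱ T] ω) :=
        mul_le_mul_of_nonneg_left hstep (exp_pos _).le
    _ = expSupermartingale P ℱ X η T ω := by
        simp only [f, expSupermartingale, condSqSum_succ, ← exp_add]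
        ring_nf

lemma supermartingale_expSupermartingale [IsFiniteMeasure P]
    (hmds : ∀ t, 1 ≤ t → P[X t | ℱ (t - 1)] =ᵐ[P] 0) (hηR : η * R ≤ 1) :
    Supermartingale (expSupermartingale P ℱ X η) ℱ P :=
  supermartingale_nat (stronglyAdapted_expSupermartingale hadapt η)
    (integrable_expSupermartingale hadapt hbdd hη)
    (condExp_expSupermartingale_succ_le hadapt hbdd hη hmds hηR)

lemma integral_expSupermartingale_le_one [IsProbabilityMeasure P]
    (hmds : ∀ t, 1 ≤ t → P[X t | ℱ (t - 1)] =ᵐ[P] 0) (hηR : η * R ≤ 1) (T : ℕ) :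
    ∫ ω, expSupermartingale P ℱ X η T ω ∂P ≤ 1 := by
  simpa [expSupermartingale, condSqSum] using
    (supermartingale_expSupermartingale hadapt hbdd hη hmds hηR).setIntegral_le
      (Nat.zero_le T) MeasurableSet.univ

end Freedman

theorem freedman_inequality_general {Ω : Type*} {m0 : MeasurableSpace Ω} {P : Measure Ω}
    [IsProbabilityMeasure P] (ℱ : Filtration ℕ m0)
    (X : ℕ → Ω → ℝ) (R : ℝ)
    (hadapt : ∀ t, 1 ≤ t → StronglyMeasurable[ℱ t] (X t))
    (hmds : ∀ t, 1 ≤ t → P[X t | ℱ (t - 1)] =ᵐ[P] 0)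
    (hbdd : ∀ t, 1 ≤ t → ∀ᵐ ω ∂P, |X t ω| ≤ R)
    (T : ℕ) (δ : ℝ) (hδ0 : 0 < δ)
    (η : ℝ) (hη0 : 0 < η) (hη1 : η < 1 / R) :
    ENNReal.ofReal (1 - δ) ≤
      P {ω | ∑ t ∈ Icc 1 T, X t ω ≤
        η * ∑ t ∈ Icc 1 T, (P[fun ω' => (X t ω') ^ 2 | ℱ (t - 1)]) ω
          + Real.log (1 / δ) / η} := by
  have hηR : η * R ≤ 1 := ((lt_div_iff₀ (one_div_pos.mp (hη0.trans hη1))).mp hη1).le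
  have hchernoff := ofReal_one_sub_le_measure_lt_log_of_integral_exp_le_one
    ((stronglyMeasurable_exponent hadapt η T.le_succ).mono (ℱ.le T)).measurable
    (integrable_expSupermartingale hadapt hbdd hη0.le T)
    (integral_expSupermartingale_le_one hadapt hbdd hη0.le hmds hηR T) hδ0
  refine hchernoff.trans (measure_mono fun ω hω => ?_)
  simp only [Set.mem_ofPred_eq, condSqSum] at hω ⊢
  rw [← sub_le_iff_le_add', le_div_iff₀ hη0]
  linarith

/-- Freedman's inequality: if `{X_t}_{t ≥ 1}` is a martingale difference sequence adapted to
the filtration `ℱ` with `|X_t| ≤ R` a.s., then for any `T`, `δ ∈ (0,1)` and `η ∈ (0, 1/R)`,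
with probability at least `1 − δ`,
`∑_{t=1}^T X_t ≤ η ∑_{t=1}^T E[X_t² | ℱ_{t−1}] + log(1/δ)/η`. -/
theorem freedman_inequality {Ω : Type*} {m0 : MeasurableSpace Ω} {P : Measure Ω}
    [IsProbabilityMeasure P] (ℱ : Filtration ℕ m0)
    (X : ℕ → Ω → ℝ) (R : ℝ) (hR : 0 < R)
    (hadapt : ∀ t, 1 ≤ t → StronglyMeasurable[ℱ t] (X t))
    (hmds : ∀ t, 1 ≤ t → P[X t | ℱ (t - 1)] =ᵐ[P] 0)
    (hbdd : ∀ t, 1 ≤ t → ∀ᵐ ω ∂P, |X t ω| ≤ R)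
    (T : ℕ) (δ : ℝ) (hδ0 : 0 < δ) (hδ1 : δ < 1)
    (η : ℝ) (hη0 : 0 < η) (hη1 : η < 1 / R) :
    ENNReal.ofReal (1 - δ) ≤
      P {ω | ∑ t ∈ Icc 1 T, X t ω ≤
        η * ∑ t ∈ Icc 1 T, (P[fun ω' => (X t ω') ^ 2 | ℱ (t - 1)]) ω
          + Real.log (1 / δ) / η} :=
  freedman_inequality_general ℱ X R hadapt hmds hbdd T δ hδ0 η hη0 hη1
end

section
/- Let (Ω, ℱ, P) be a probability space with a filtration {ℱ_t}_{t≥0}, and let {Y_t}_{t≥1} be a real-valued sequence of random variables adapted to {ℱ_t} (each Y_t is ℱ_t-measurable) such that 0 ≤ Y_t ≤ C almost surely for all t, for some real C > 0. Then for every T ∈ ℕ and every δ ∈ (0,1), with probability at least 1 − δ it holds that Σ_{t=1}^T E[Y_t | ℱ_{t−1}] ≤ (1 + 1/(2C)) Σ_{t=1}^T Y_t + 2(2C+1)² log(1/δ). -/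
open MeasureTheory Finset

/-! With `λ = 1 / (C (2C + 1))` and `a = 2 / (2C + 1)²`, the scalar bound `exp (-λ y) ≤ 1 - a y`
on `[0, C]` gives `E[exp (-λ Y_t) | ℱ_{t-1}] ≤ 1 - a E[Y_t | ℱ_{t-1}] ≤ exp (-a E[Y_t | ℱ_{t-1}])`,
so `exp (∑_{t ≤ T} (a E[Y_t | ℱ_{t-1}] - λ Y_t))` is a supermartingale started at `1`.
Chernoff's bound at level `log (1/δ)` then yields the claim, because `λ / a = 1 + 1/(2C)` and
`1 / a ≤ 2 (2C + 1)²`. -/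

lemma exp_neg_mul_le_one_sub_mul {C y : ℝ} (hC : 0 < C) (hy0 : 0 ≤ y) (hyC : y ≤ C) :
    Real.exp (-(1 / (C * (2 * C + 1)) * y)) ≤ 1 - 2 / (2 * C + 1) ^ 2 * y := by
  set x := 1 / (C * (2 * C + 1)) * y
  have hx : 0 < 1 + x := by positivity
  have hexp : Real.exp (-x) ≤ 1 / (1 + x) := by
    rw [Real.exp_neg, one_div]
    exact inv_anti₀ hx (by linarith [Real.add_one_le_exp x])
  -- `(1 - a y) (1 + λ y) - 1 = y (2C + 1 - 2y) / (C (2C + 1)³) ≥ 0`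
  have hprod : 1 ≤ (1 - 2 / (2 * C + 1) ^ 2 * y) * (1 + x) := by
    have key : (1 - 2 / (2 * C + 1) ^ 2 * y) * (1 + x) - 1
        = y * (2 * C + 1 - 2 * y) / (C * (2 * C + 1) ^ 3) := by
      simp only [x]; field_simp; ring
    have : 0 ≤ y * (2 * C + 1 - 2 * y) / (C * (2 * C + 1) ^ 3) :=
      div_nonneg (mul_nonneg hy0 (by linarith)) (by positivity)
    linarith
  exact hexp.trans ((div_le_iff₀ hx).2 hprod)

lemma le_add_of_mul_sub_mul_lt {C G Z L : ℝ} (hC : 0 < C) (hL : 0 ≤ L)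
    (h : 2 / (2 * C + 1) ^ 2 * G - 1 / (C * (2 * C + 1)) * Z < L) :
    G ≤ (1 + 1 / (2 * C)) * Z + 2 * (2 * C + 1) ^ 2 * L := by
  have hscale : G - (1 + 1 / (2 * C)) * Z
      = (2 * C + 1) ^ 2 / 2 * (2 / (2 * C + 1) ^ 2 * G - 1 / (C * (2 * C + 1)) * Z) := by
    field_simp
  have : (2 * C + 1) ^ 2 / 2 * (2 / (2 * C + 1) ^ 2 * G - 1 / (C * (2 * C + 1)) * Z)
      ≤ (2 * C + 1) ^ 2 / 2 * L := mul_le_mul_of_nonneg_left h.le (by positivity)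
  nlinarith [sq_nonneg (2 * C + 1)]

section CondExp

variable {Ω : Type*} {m m0 : MeasurableSpace Ω} {μ : Measure Ω} [IsFiniteMeasure μ]

lemma ae_condExp_mem_Icc (hm : m ≤ m0) {Y : Ω → ℝ} {C : ℝ} (hY : Integrable Y μ)
    (hbdd : ∀ᵐ ω ∂μ, 0 ≤ Y ω ∧ Y ω ≤ C) :
    ∀ᵐ ω ∂μ, 0 ≤ μ[Y | m] ω ∧ μ[Y | m] ω ≤ C := by
  have hle : μ[Y | m] ≤ᵐ[μ] μ[fun _ ↦ C | m] :=
    condExp_mono hY (integrable_const C) (hbdd.mono fun _ h ↦ h.2)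
  rw [condExp_const hm] at hle
  filter_upwards [condExp_nonneg (hbdd.mono fun _ h ↦ h.1), hle] with ω h0 hC
  exact ⟨h0, hC⟩

lemma condExp_le_exp_neg_mul_condExp (hm : m ≤ m0) {h Y : Ω → ℝ} (a : ℝ)
    (hh : Integrable h μ) (hY : Integrable Y μ) (hle : h ≤ᵐ[μ] fun ω ↦ 1 - a * Y ω) :
    μ[h | m] ≤ᵐ[μ] fun ω ↦ Real.exp (-(a * μ[Y | m] ω)) := by
  have hlin : μ[(fun _ ↦ 1) - a • Y | m] =ᵐ[μ] fun ω ↦ 1 - a * μ[Y | m] ω := by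
    have hsub := condExp_sub (integrable_const (1 : ℝ)) (hY.smul a) m
    rw [condExp_const hm] at hsub
    filter_upwards [hsub, condExp_smul a Y m] with ω hω hsmul
    simp [hω, hsmul]
  have hmono := condExp_mono (m := m) hh ((integrable_const 1).sub (hY.smul a)) hle
  filter_upwards [hmono, hlin] with ω hω hωlin
  linarith [Real.add_one_le_exp (-(a * μ[Y | m] ω))]

end CondExp

section CompensatedSum

variable {Ω : Type*} {m0 : MeasurableSpace Ω} {P : Measure Ω} (ℱ : Filtration ℕ m0)
  {Y : ℕ → Ω → ℝ} {a lam C : ℝ}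

noncomputable def compensatedSum (P : Measure Ω) (ℱ : Filtration ℕ m0) (Y : ℕ → Ω → ℝ)
    (a lam : ℝ) (T : ℕ) (ω : Ω) : ℝ :=
  ∑ t ∈ Icc 1 T, (a * P[Y t | ℱ (t - 1)] ω - lam * Y t ω)

@[simp]
lemma compensatedSum_zero : compensatedSum P ℱ Y a lam 0 = 0 := by
  funext ω; simp [compensatedSum]

lemma compensatedSum_succ (T : ℕ) (ω : Ω) :
    compensatedSum P ℱ Y a lam (T + 1) ω =
      compensatedSum P ℱ Y a lam T ω + a * P[Y (T + 1) | ℱ T] ω - lam * Y (T + 1) ω := by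
  rw [compensatedSum, sum_Icc_succ_top (by omega), Nat.add_sub_cancel, compensatedSum, add_sub_assoc]

lemma compensatedSum_eq (T : ℕ) (ω : Ω) :
    compensatedSum P ℱ Y a lam T ω =
      a * ∑ t ∈ Icc 1 T, P[Y t | ℱ (t - 1)] ω - lam * ∑ t ∈ Icc 1 T, Y t ω := by
  rw [compensatedSum, mul_sum, mul_sum, sum_sub_distrib]

lemma stronglyMeasurable_compensatedSum
    (hadapt : ∀ t, 1 ≤ t → StronglyMeasurable[ℱ t] (Y t)) (T : ℕ) :
    StronglyMeasurable[ℱ T] (compensatedSum P ℱ Y a lam T) := by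
  refine Finset.stronglyMeasurable_fun_sum _ fun t ht ↦ ?_
  rw [mem_Icc] at ht
  exact ((stronglyMeasurable_condExp.mono (ℱ.mono (by omega))).const_mul a).sub
    (((hadapt t ht.1).mono (ℱ.mono ht.2)).const_mul lam)

variable [IsFiniteMeasure P]

lemma ae_condExp_pred_mem_Icc (hadapt : ∀ t, 1 ≤ t → StronglyMeasurable[ℱ t] (Y t))
    (hbdd : ∀ t, 1 ≤ t → ∀ᵐ ω ∂P, 0 ≤ Y t ω ∧ Y t ω ≤ C) {t : ℕ} (ht : 1 ≤ t) :
    ∀ᵐ ω ∂P, 0 ≤ P[Y t | ℱ (t - 1)] ω ∧ P[Y t | ℱ (t - 1)] ω ≤ C :=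
  ae_condExp_mem_Icc (ℱ.le _)
    (.of_mem_Icc 0 C ((hadapt t ht).mono (ℱ.le t)).measurable.aemeasurable (hbdd t ht))
    (hbdd t ht)

lemma ae_compensatedSum_le (ha : 0 ≤ a) (hlam : 0 ≤ lam)
    (hadapt : ∀ t, 1 ≤ t → StronglyMeasurable[ℱ t] (Y t))
    (hbdd : ∀ t, 1 ≤ t → ∀ᵐ ω ∂P, 0 ≤ Y t ω ∧ Y t ω ≤ C) (T : ℕ) :
    ∀ᵐ ω ∂P, compensatedSum P ℱ Y a lam T ω ≤ T * (a * C) := by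
  have hall : ∀ᵐ ω ∂P, ∀ t ∈ Icc 1 T,
      (0 ≤ Y t ω ∧ Y t ω ≤ C) ∧ (0 ≤ P[Y t | ℱ (t - 1)] ω ∧ P[Y t | ℱ (t - 1)] ω ≤ C) :=
    (Filter.eventually_all_finset _).2 fun t ht ↦
      (hbdd t (mem_Icc.1 ht).1).and (ae_condExp_pred_mem_Icc ℱ hadapt hbdd (mem_Icc.1 ht).1)
  filter_upwards [hall] with ω hω
  calc compensatedSum P ℱ Y a lam T ω ≤ ∑ _t ∈ Icc 1 T, a * C := by
        refine sum_le_sum fun t ht ↦ ?_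
        obtain ⟨⟨hY0, -⟩, -, hgC⟩ := hω t ht
        linarith [mul_le_mul_of_nonneg_left hgC ha, mul_nonneg hlam hY0]
    _ = T * (a * C) := by simp

lemma integrable_exp_compensatedSum (ha : 0 ≤ a) (hlam : 0 ≤ lam)
    (hadapt : ∀ t, 1 ≤ t → StronglyMeasurable[ℱ t] (Y t))
    (hbdd : ∀ t, 1 ≤ t → ∀ᵐ ω ∂P, 0 ≤ Y t ω ∧ Y t ω ≤ C) (T : ℕ) :
    Integrable (fun ω ↦ Real.exp (compensatedSum P ℱ Y a lam T ω)) P := by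
  refine .of_bound (Real.continuous_exp.comp_stronglyMeasurable
    ((stronglyMeasurable_compensatedSum ℱ hadapt T).mono (ℱ.le T))).aestronglyMeasurable
    (Real.exp (T * (a * C))) ?_
  filter_upwards [ae_compensatedSum_le ℱ ha hlam hadapt hbdd T] with ω hω
  rw [Real.norm_of_nonneg (Real.exp_pos _).le]
  exact Real.exp_le_exp.2 hω

lemma condExp_exp_compensatedSum_succ_le (ha : 0 ≤ a) (hlam : 0 ≤ lam)
    (hadapt : ∀ t, 1 ≤ t → StronglyMeasurable[ℱ t] (Y t))
    (hbdd : ∀ t, 1 ≤ t → ∀ᵐ ω ∂P, 0 ≤ Y t ω ∧ Y t ω ≤ C)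
    (hkey : ∀ y, 0 ≤ y → y ≤ C → Real.exp (-(lam * y)) ≤ 1 - a * y) (T : ℕ) :
    P[fun ω ↦ Real.exp (compensatedSum P ℱ Y a lam (T + 1) ω) | ℱ T] ≤ᵐ[P]
      fun ω ↦ Real.exp (compensatedSum P ℱ Y a lam T ω) := by
  set g := P[Y (T + 1) | ℱ T]
  set past : Ω → ℝ := fun ω ↦ Real.exp (compensatedSum P ℱ Y a lam T ω + a * g ω)
  set next : Ω → ℝ := fun ω ↦ Real.exp (-(lam * Y (T + 1) ω))
  have hsplit : (fun ω ↦ Real.exp (compensatedSum P ℱ Y a lam (T + 1) ω)) = past * next := by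
    funext ω
    rw [Pi.mul_apply, ← Real.exp_add, compensatedSum_succ, sub_eq_add_neg]
  have hYsm : StronglyMeasurable (Y (T + 1)) := (hadapt _ le_add_self).mono (ℱ.le _)
  have hbddT := hbdd (T + 1) le_add_self
  have hgbdd : ∀ᵐ ω ∂P, 0 ≤ g ω ∧ g ω ≤ C :=
    ae_condExp_pred_mem_Icc ℱ hadapt hbdd (t := T + 1) le_add_self
  have hpast_sm : StronglyMeasurable[ℱ T] past := Real.continuous_exp.comp_stronglyMeasurable
    ((stronglyMeasurable_compensatedSum ℱ hadapt T).add (stronglyMeasurable_condExp.const_mul a))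
  have hpast_bdd : ∀ᵐ ω ∂P, ‖past ω‖ ≤ Real.exp (T * (a * C) + a * C) := by
    filter_upwards [ae_compensatedSum_le ℱ ha hlam hadapt hbdd T, hgbdd] with ω hS hg
    rw [Real.norm_of_nonneg (Real.exp_pos _).le]
    exact Real.exp_le_exp.2 (add_le_add hS (mul_le_mul_of_nonneg_left hg.2 ha))
  have hnext_int : Integrable next P := by
    refine .of_bound (Real.continuous_exp.comp_stronglyMeasurable
      (hYsm.const_mul lam).neg).aestronglyMeasurable 1 ?_
    filter_upwards [hbddT] with ω hω
    rw [Real.norm_of_nonneg (Real.exp_pos _).le, Real.exp_le_one_iff, neg_nonpos]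
    exact mul_nonneg hlam hω.1
  have hnext : P[next | ℱ T] ≤ᵐ[P] fun ω ↦ Real.exp (-(a * g ω)) :=
    condExp_le_exp_neg_mul_condExp (ℱ.le T) a hnext_int
      (.of_mem_Icc 0 C hYsm.measurable.aemeasurable hbddT)
      (hbddT.mono fun ω hω ↦ hkey _ hω.1 hω.2)
  rw [hsplit]
  filter_upwards [condExp_stronglyMeasurable_mul_of_bound (ℱ.le T) hpast_sm hnext_int _ hpast_bdd,
    hnext] with ω hpull hω
  rw [hpull, Pi.mul_apply]
  calc past ω * P[next | ℱ T] ω ≤ past ω * Real.exp (-(a * g ω)) :=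
        mul_le_mul_of_nonneg_left hω (Real.exp_pos _).le
    _ = Real.exp (compensatedSum P ℱ Y a lam T ω) := by
        rw [← Real.exp_add]
        ring_nf

lemma supermartingale_exp_compensatedSum (ha : 0 ≤ a) (hlam : 0 ≤ lam)
    (hadapt : ∀ t, 1 ≤ t → StronglyMeasurable[ℱ t] (Y t))
    (hbdd : ∀ t, 1 ≤ t → ∀ᵐ ω ∂P, 0 ≤ Y t ω ∧ Y t ω ≤ C)
    (hkey : ∀ y, 0 ≤ y → y ≤ C → Real.exp (-(lam * y)) ≤ 1 - a * y) :
    Supermartingale (fun T ω ↦ Real.exp (compensatedSum P ℱ Y a lam T ω)) ℱ P :=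
  supermartingale_nat
    (fun T ↦ Real.continuous_exp.comp_stronglyMeasurable
      (stronglyMeasurable_compensatedSum ℱ hadapt T))
    (integrable_exp_compensatedSum ℱ ha hlam hadapt hbdd)
    (condExp_exp_compensatedSum_succ_le ℱ ha hlam hadapt hbdd hkey)

lemma measureReal_le_compensatedSum_le [IsProbabilityMeasure P] (ha : 0 ≤ a) (hlam : 0 ≤ lam)
    (hadapt : ∀ t, 1 ≤ t → StronglyMeasurable[ℱ t] (Y t))
    (hbdd : ∀ t, 1 ≤ t → ∀ᵐ ω ∂P, 0 ≤ Y t ω ∧ Y t ω ≤ C)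
    (hkey : ∀ y, 0 ≤ y → y ≤ C → Real.exp (-(lam * y)) ≤ 1 - a * y) (T : ℕ) (L : ℝ) :
    P.real {ω | L ≤ compensatedSum P ℱ Y a lam T ω} ≤ Real.exp (-L) := by
  have hmgf : ProbabilityTheory.mgf (compensatedSum P ℱ Y a lam T) P 1 ≤ 1 := by
    have := (supermartingale_exp_compensatedSum ℱ ha hlam hadapt hbdd hkey).setIntegral_le
      T.zero_le MeasurableSet.univ
    simpa [ProbabilityTheory.mgf] using this
  calc P.real {ω | L ≤ compensatedSum P ℱ Y a lam T ω}
      ≤ Real.exp (-1 * L) * ProbabilityTheory.mgf (compensatedSum P ℱ Y a lam T) P 1 :=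
        ProbabilityTheory.measure_ge_le_exp_mul_mgf L zero_le_one
          (by simpa using integrable_exp_compensatedSum ℱ ha hlam hadapt hbdd T)
    _ ≤ Real.exp (-L) := by
        rw [neg_one_mul]
        exact mul_le_of_le_one_right (Real.exp_pos _).le hmgf

end CompensatedSum

/-- Consequence of Freedman's inequality for bounded, nonnegative adapted sequences:
if `0 ≤ Y_t ≤ C` a.s. and each `Y_t` is `ℱ_t`-measurable, then for every `T` and `δ ∈ (0,1)`,
with probability at least `1 − δ`,
`∑_{t=1}^T E[Y_t | ℱ_{t−1}] ≤ (1 + 1/(2C)) ∑_{t=1}^T Y_t + 2(2C+1)² log(1/δ)`. -/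
theorem freedman_consequence_condexp_le {Ω : Type*} {m0 : MeasurableSpace Ω} {P : Measure Ω}
    [IsProbabilityMeasure P] (ℱ : Filtration ℕ m0)
    (Y : ℕ → Ω → ℝ) (C : ℝ) (hC : 0 < C)
    (hadapt : ∀ t, 1 ≤ t → StronglyMeasurable[ℱ t] (Y t))
    (hbdd : ∀ t, 1 ≤ t → ∀ᵐ ω ∂P, 0 ≤ Y t ω ∧ Y t ω ≤ C)
    (T : ℕ) (δ : ℝ) (hδ0 : 0 < δ) (hδ1 : δ < 1) :
    ENNReal.ofReal (1 - δ) ≤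
      P {ω | ∑ t ∈ Icc 1 T, (P[Y t | ℱ (t - 1)]) ω ≤
        (1 + 1 / (2 * C)) * ∑ t ∈ Icc 1 T, Y t ω
          + 2 * (2 * C + 1) ^ 2 * Real.log (1 / δ)} := by
  set S := compensatedSum P ℱ Y (2 / (2 * C + 1) ^ 2) (1 / (C * (2 * C + 1))) T
  set L := Real.log (1 / δ)
  have hL : 0 ≤ L := Real.log_nonneg (by rw [le_div_iff₀ hδ0]; linarith)
  have htail : P.real {ω | L ≤ S ω} ≤ δ := by
    have := measureReal_le_compensatedSum_le ℱ (by positivity) (by positivity) hadapt hbdd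
      (fun _ ↦ exp_neg_mul_le_one_sub_mul hC) T L
    rwa [Real.exp_neg, Real.exp_log (by positivity), inv_div, div_one] at this
  have hmeas : MeasurableSet {ω | L ≤ S ω} := measurableSet_le measurable_const
    ((stronglyMeasurable_compensatedSum ℱ hadapt T).mono (ℱ.le T)).measurable
  calc ENNReal.ofReal (1 - δ) ≤ ENNReal.ofReal (P.real {ω | L ≤ S ω}ᶜ) := by
        rw [probReal_compl_eq_one_sub hmeas]
        exact ENNReal.ofReal_le_ofReal (by linarith)
    _ = P {ω | L ≤ S ω}ᶜ := ofReal_measureReal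
    _ ≤ _ := by
        refine measure_mono fun ω hω ↦ le_add_of_mul_sub_mul_lt hC hL ?_
        simpa [S, compensatedSum_eq] using hω
end

section
/- Let (Ω, ℱ, P) be a probability space with a filtration {ℱ_t}_{t≥0}, and let {Y_t}_{t≥1} be a real-valued sequence of random variables adapted to {ℱ_t} (each Y_t is ℱ_t-measurable) such that 0 ≤ Y_t ≤ C almost surely for all t, for some real C > 0. Then for every T ∈ ℕ and every δ ∈ (0,1), with probability at least 1 − δ it holds that Σ_{t=1}^T Y_t ≤ 2 Σ_{t=1}^T E[Y_t | ℱ_{t−1}] + 4C log(1/δ). -/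
/-!
Put `g_t = E[Y_t | ℱ_{t-1}]` and `α = (e - 1) / C`. Convexity of `exp` on `[0, 1]` gives
`E[exp (Y_t / C) | ℱ_{t-1}] ≤ 1 + α g_t ≤ exp (α g_t)`, so `exp (∑_{s ≤ t} (Y_s / C - α g_s))` is a
supermartingale started at `1`. By Markov's inequality its exponent exceeds `log (1/δ)` with
probability at most `δ`, and otherwise `∑ Y_t < α C ∑ g_t + C log (1/δ)`, which is at most the
claimed bound because `e - 1 ≤ 2` and `g_t ≥ 0`.
-/

open MeasureTheory Finset Real

theorem Real.exp_le_one_add_exp_one_sub_one_mul {x : ℝ} (h0 : 0 ≤ x) (h1 : x ≤ 1) :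
    exp x ≤ 1 + (exp 1 - 1) * x := by
  have h := convexOn_exp.2 (Set.mem_univ 0) (Set.mem_univ 1) (sub_nonneg.2 h1) h0
    (sub_add_cancel 1 x)
  simp only [smul_eq_mul, mul_zero, mul_one, zero_add, exp_zero] at h
  linarith

section Conditional

variable {Ω : Type*} {m m0 : MeasurableSpace Ω} {P : Measure Ω} [IsFiniteMeasure P]
  {C : ℝ} {Y : Ω → ℝ}

theorem integrable_exp_div_of_ae_le (hC : 0 < C) (hY : AEStronglyMeasurable Y P)
    (hle : ∀ᵐ ω ∂P, Y ω ≤ C) : Integrable (fun ω => exp (Y ω / C)) P := by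
  refine Integrable.of_bound (continuous_exp.comp_aestronglyMeasurable
    (hY.aemeasurable.div_const C).aestronglyMeasurable) (exp 1) ?_
  filter_upwards [hle] with ω h
  rw [norm_of_nonneg (exp_pos _).le, exp_le_exp]
  exact (div_le_one hC).2 h

theorem condExp_exp_div_le_exp_condExp (hm : m ≤ m0) (hC : 0 < C) (hY : Integrable Y P)
    (hbdd : ∀ᵐ ω ∂P, 0 ≤ Y ω ∧ Y ω ≤ C) :
    P[fun ω => exp (Y ω / C) | m] ≤ᵐ[P] fun ω => exp ((exp 1 - 1) / C * P[Y | m] ω) := by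
  set α := (exp 1 - 1) / C
  have hchord : (fun ω => exp (Y ω / C)) ≤ᵐ[P] fun ω => 1 + α * Y ω := by
    filter_upwards [hbdd] with ω ⟨h0, h1⟩
    have := exp_le_one_add_exp_one_sub_one_mul (div_nonneg h0 hC.le) ((div_le_one hC).2 h1)
    linarith [show (exp 1 - 1) * (Y ω / C) = α * Y ω by ring]
  have haffine : Integrable (fun ω => 1 + α * Y ω) P := (integrable_const 1).add (hY.const_mul α)
  have hexp := integrable_exp_div_of_ae_le hC hY.aestronglyMeasurable (hbdd.mono fun ω h => h.2)
  have hcond_affine : P[fun ω => 1 + α * Y ω | m] =ᵐ[P] fun ω => 1 + α * P[Y | m] ω := by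
    filter_upwards [condExp_add (integrable_const 1) (hY.smul α) m,
      condExp_smul (m := m) (μ := P) α Y] with ω hadd hsmul
    change P[(fun _ => (1 : ℝ)) + α • Y | m] ω = _
    rw [hadd, Pi.add_apply, condExp_const hm, hsmul]
    rfl
  filter_upwards [condExp_mono (m := m) hexp haffine hchord, hcond_affine] with ω hle heq
  rw [heq] at hle
  linarith [add_one_le_exp (α * P[Y | m] ω)]

theorem condExp_exp_sub_le_one (hm : m ≤ m0) (hC : 0 < C) (hY : Integrable Y P)
    (hbdd : ∀ᵐ ω ∂P, 0 ≤ Y ω ∧ Y ω ≤ C) :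
    P[fun ω => exp (Y ω / C - (exp 1 - 1) / C * P[Y | m] ω) | m] ≤ᵐ[P] 1 := by
  set α := (exp 1 - 1) / C
  have hα : 0 ≤ α := div_nonneg (by linarith [add_one_le_exp 1]) hC.le
  set u : Ω → ℝ := fun ω => exp (-(α * P[Y | m] ω))
  have hsplit : (fun ω => exp (Y ω / C - α * P[Y | m] ω)) = u * fun ω => exp (Y ω / C) := by
    funext ω
    rw [Pi.mul_apply, ← exp_add]
    ring_nf
  have hu : StronglyMeasurable[m] u :=
    continuous_exp.comp_stronglyMeasurable (stronglyMeasurable_condExp.const_mul α).neg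
  have hu_le : ∀ᵐ ω ∂P, ‖u ω‖ ≤ 1 := by
    filter_upwards [condExp_nonneg (m := m) (hbdd.mono fun ω h => h.1)] with ω hg
    rw [norm_of_nonneg (exp_pos _).le, exp_le_one_iff, neg_nonpos]
    exact mul_nonneg hα hg
  have hexp := integrable_exp_div_of_ae_le hC hY.aestronglyMeasurable (hbdd.mono fun ω h => h.2)
  rw [hsplit]
  filter_upwards [condExp_mul_of_stronglyMeasurable_left hu
      (hexp.bdd_mul (hu.mono hm).aestronglyMeasurable hu_le) hexp,
    condExp_exp_div_le_exp_condExp hm hC hY hbdd] with ω hpull hle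
  rw [hpull, Pi.mul_apply, Pi.one_apply]
  calc u ω * P[fun ω => exp (Y ω / C) | m] ω ≤ u ω * exp (α * P[Y | m] ω) :=
        mul_le_mul_of_nonneg_left hle (exp_pos _).le
    _ = 1 := by rw [← exp_add, neg_add_cancel, exp_zero]

end Conditional

section Supermartingale

variable {Ω : Type*} {m0 : MeasurableSpace Ω} {P : Measure Ω} [IsFiniteMeasure P]
  {ℱ : Filtration ℕ m0} {Z : ℕ → Ω → ℝ}

theorem supermartingale_exp_sum_Icc (hZ : ∀ t, StronglyMeasurable[ℱ (t + 1)] (Z (t + 1)))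
    (hZ_bdd : ∀ t, ∃ K, ∀ᵐ ω ∂P, Z (t + 1) ω ≤ K)
    (hstep : ∀ t, P[fun ω => exp (Z (t + 1) ω) | ℱ t] ≤ᵐ[P] 1) :
    Supermartingale (fun n ω => exp (∑ t ∈ Icc 1 n, Z t ω)) ℱ P := by
  set M : ℕ → Ω → ℝ := fun n ω => exp (∑ t ∈ Icc 1 n, Z t ω)
  have hsucc : ∀ n, M (n + 1) = M n * fun ω => exp (Z (n + 1) ω) := fun n => by
    funext ω
    simp only [M, Pi.mul_apply, sum_Icc_succ_top (Nat.le_add_left 1 n), exp_add]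
  have hadapted : StronglyAdapted ℱ M := fun n =>
    continuous_exp.comp_stronglyMeasurable <| Finset.stronglyMeasurable_fun_sum _ fun t ht => by
      obtain ⟨h1, hn⟩ := mem_Icc.1 ht
      obtain ⟨s, rfl⟩ := Nat.exists_eq_add_of_le' h1
      exact (hZ s).mono (ℱ.mono hn)
  have hexpZ_bdd : ∀ t, ∃ c, ∀ᵐ ω ∂P, ‖exp (Z (t + 1) ω)‖ ≤ c := fun t => by
    obtain ⟨K, hK⟩ := hZ_bdd t
    exact ⟨exp K, hK.mono fun ω h => by rwa [norm_of_nonneg (exp_pos _).le, exp_le_exp]⟩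
  have hexpZ_meas : ∀ t, AEStronglyMeasurable (fun ω => exp (Z (t + 1) ω)) P := fun t =>
    (continuous_exp.comp_stronglyMeasurable ((hZ t).mono (ℱ.le _))).aestronglyMeasurable
  have hint : ∀ n, Integrable (M n) P := by
    intro n
    induction n with
    | zero => simp [M]
    | succ n ih =>
      obtain ⟨c, hc⟩ := hexpZ_bdd n
      rw [hsucc]
      exact ih.mul_bdd (hexpZ_meas n) hc
  refine supermartingale_nat hadapted hint fun n => ?_
  obtain ⟨c, hc⟩ := hexpZ_bdd n
  rw [hsucc]
  filter_upwards [condExp_mul_of_stronglyMeasurable_left (hadapted n) (hsucc n ▸ hint (n + 1))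
      ((integrable_const c).mono' (hexpZ_meas n) hc), hstep n] with ω hpull hle
  rw [hpull, Pi.mul_apply]
  simpa using mul_le_mul_of_nonneg_left hle (exp_pos (∑ t ∈ Icc 1 n, Z t ω)).le

end Supermartingale

theorem measure_ge_le_exp_neg_of_integral_exp_le_one {Ω : Type*} {m0 : MeasurableSpace Ω}
    {P : Measure Ω} [IsFiniteMeasure P] {X : Ω → ℝ}
    (hint : Integrable (fun ω => exp (X ω)) P) (hle : ∫ ω, exp (X ω) ∂P ≤ 1) (ε : ℝ) :
    P {ω | ε ≤ X ω} ≤ ENNReal.ofReal (exp (-ε)) := by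
  have h := ProbabilityTheory.measure_ge_le_exp_mul_mgf (μ := P) ε zero_le_one
    (by simpa using hint)
  simp only [ProbabilityTheory.mgf, one_mul, neg_mul] at h
  rw [← ofReal_measureReal]
  exact ENNReal.ofReal_le_ofReal (h.trans (mul_le_of_le_one_right (exp_pos _).le hle))

theorem ofReal_one_sub_le_of_measure_compl_le {Ω : Type*} {m0 : MeasurableSpace Ω}
    {P : Measure Ω} [IsProbabilityMeasure P] {s : Set Ω} {δ : ℝ} (hδ : 0 ≤ δ)
    (hs : P sᶜ ≤ ENNReal.ofReal δ) : ENNReal.ofReal (1 - δ) ≤ P s := by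
  have hcover : 1 ≤ P s + P sᶜ := by
    rw [← measure_univ (μ := P), ← Set.union_compl_self s]
    exact measure_union_le s sᶜ
  rw [ENNReal.ofReal_sub 1 hδ, ENNReal.ofReal_one, tsub_le_iff_right]
  exact hcover.trans (add_le_add_right hs _)

theorem measure_sum_Icc_ge_le_exp_neg {Ω : Type*} {m0 : MeasurableSpace Ω} {P : Measure Ω}
    [IsProbabilityMeasure P] {ℱ : Filtration ℕ m0} {Z : ℕ → Ω → ℝ}
    (hZ : ∀ t, StronglyMeasurable[ℱ (t + 1)] (Z (t + 1)))
    (hZ_bdd : ∀ t, ∃ K, ∀ᵐ ω ∂P, Z (t + 1) ω ≤ K)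
    (hstep : ∀ t, P[fun ω => exp (Z (t + 1) ω) | ℱ t] ≤ᵐ[P] 1) (n : ℕ) (ε : ℝ) :
    P {ω | ε ≤ ∑ t ∈ Icc 1 n, Z t ω} ≤ ENNReal.ofReal (exp (-ε)) := by
  have hM := supermartingale_exp_sum_Icc hZ hZ_bdd hstep
  refine measure_ge_le_exp_neg_of_integral_exp_le_one (hM.integrable n) ?_ ε
  have h := hM.setIntegral_le (Nat.zero_le n) MeasurableSet.univ
  simpa [setIntegral_univ] using h

theorem measure_sum_div_sub_condExp_ge_le_exp_neg {Ω : Type*} {m0 : MeasurableSpace Ω}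
    {P : Measure Ω} [IsProbabilityMeasure P] {ℱ : Filtration ℕ m0} {Y : ℕ → Ω → ℝ} {C : ℝ}
    (hC : 0 < C) (hadapt : ∀ t, 1 ≤ t → StronglyMeasurable[ℱ t] (Y t))
    (hbdd : ∀ t, 1 ≤ t → ∀ᵐ ω ∂P, 0 ≤ Y t ω ∧ Y t ω ≤ C) (n : ℕ) (ε : ℝ) :
    P {ω | ε ≤ ∑ t ∈ Icc 1 n, (Y t ω / C - (exp 1 - 1) / C * P[Y t | ℱ (t - 1)] ω)} ≤
      ENNReal.ofReal (exp (-ε)) := by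
  have hα : 0 ≤ (exp 1 - 1) / C := div_nonneg (by linarith [add_one_le_exp 1]) hC.le
  have hadapt' : ∀ t, StronglyMeasurable[ℱ (t + 1)] (Y (t + 1)) := fun t =>
    hadapt _ (Nat.le_add_left 1 t)
  have hbdd' : ∀ t, ∀ᵐ ω ∂P, 0 ≤ Y (t + 1) ω ∧ Y (t + 1) ω ≤ C := fun t =>
    hbdd _ (Nat.le_add_left 1 t)
  have hint : ∀ t, Integrable (Y (t + 1)) P := fun t =>
    Integrable.of_bound ((hadapt' t).mono (ℱ.le _)).aestronglyMeasurable C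
      ((hbdd' t).mono fun ω h => by rw [norm_of_nonneg h.1]; exact h.2)
  refine measure_sum_Icc_ge_le_exp_neg
    (fun t => ((hadapt' t).measurable.div_const C).stronglyMeasurable.sub
      ((stronglyMeasurable_condExp.const_mul _).mono (ℱ.mono t.le_succ)))
    (fun t => ⟨1, ?_⟩) (fun t => condExp_exp_sub_le_one (ℱ.le t) hC (hint t) (hbdd' t)) n ε
  filter_upwards [hbdd' t, condExp_nonneg (m := ℱ t) ((hbdd' t).mono fun ω h => h.1)]
    with ω hY hg
  have := mul_nonneg hα hg
  rw [Nat.add_sub_cancel]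
  linarith [(div_le_one hC).2 hY.2]

theorem le_div_sub_mul_of_two_mul_add_lt {a b C L : ℝ} (hC : 0 < C) (hb : 0 ≤ b) (hL : 0 ≤ L)
    (h : 2 * b + 4 * C * L < a) : L ≤ a / C - (exp 1 - 1) / C * b := by
  have he : exp 1 - 1 ≤ 2 := by linarith [exp_one_lt_d9]
  rw [show a / C - (exp 1 - 1) / C * b = (a - (exp 1 - 1) * b) / C by ring, le_div_iff₀ hC]
  nlinarith [mul_le_mul_of_nonneg_right he hb, mul_nonneg hC.le hL]

/-- Consequence of Freedman's inequality for bounded, nonnegative adapted sequences: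
if `0 ≤ Y_t ≤ C` a.s. and each `Y_t` is `ℱ_t`-measurable, then for every `T` and `δ ∈ (0,1)`,
with probability at least `1 − δ`,
`∑_{t=1}^T Y_t ≤ 2 ∑_{t=1}^T E[Y_t | ℱ_{t−1}] + 4C log(1/δ)`. -/
theorem freedman_consequence_sum_le {Ω : Type*} {m0 : MeasurableSpace Ω} {P : Measure Ω}
    [IsProbabilityMeasure P] (ℱ : Filtration ℕ m0)
    (Y : ℕ → Ω → ℝ) (C : ℝ) (hC : 0 < C)
    (hadapt : ∀ t, 1 ≤ t → StronglyMeasurable[ℱ t] (Y t))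
    (hbdd : ∀ t, 1 ≤ t → ∀ᵐ ω ∂P, 0 ≤ Y t ω ∧ Y t ω ≤ C)
    (T : ℕ) (δ : ℝ) (hδ0 : 0 < δ) (hδ1 : δ < 1) :
    ENNReal.ofReal (1 - δ) ≤
      P {ω | ∑ t ∈ Icc 1 T, Y t ω ≤
        2 * ∑ t ∈ Icc 1 T, (P[Y t | ℱ (t - 1)]) ω + 4 * C * Real.log (1 / δ)} := by
  have htail := measure_sum_div_sub_condExp_ge_le_exp_neg hC hadapt hbdd T (Real.log (1 / δ))
  rw [exp_neg, exp_log (by positivity), inv_div, div_one] at htail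
  refine ofReal_one_sub_le_of_measure_compl_le hδ0.le (le_trans (measure_mono_ae ?_) htail)
  have hcondExp_nonneg : ∀ᵐ ω ∂P, ∀ t ∈ Icc 1 T, 0 ≤ P[Y t | ℱ (t - 1)] ω :=
    (Filter.eventually_all_finset _).2 fun t ht =>
      condExp_nonneg ((hbdd t (mem_Icc.1 ht).1).mono fun ω h => h.1)
  filter_upwards [hcondExp_nonneg] with ω hg hω
  change ¬(_ : ℝ) ≤ _ at hω
  change (_ : ℝ) ≤ _
  rw [sum_sub_distrib, ← sum_div, ← mul_sum]
  exact le_div_sub_mul_of_two_mul_add_lt hC (sum_nonneg hg)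
    (log_nonneg (one_le_one_div hδ0 hδ1.le)) (not_le.1 hω)
end

section
/- (Cumulative visitation bound.) Let X be a finite set and let M ≥ 1 and H ≥ 1 be integers. Let x_{m,h} ∈ X be given for all m ∈ {1, …, M} and h ∈ {1, …, H} (the element visited at step h of episode m). For y ∈ X and m ∈ {1, …, M}, let N_{m−1}(y) = #{(m', h') : 1 ≤ m' ≤ m − 1, 1 ≤ h' ≤ H, x_{m',h'} = y} denote the number of occurrences of y during episodes 1, …, m − 1. Then Σ_{m=1}^{M} Σ_{h=1}^{H} 𝟙{N_{m−1}(x_{m,h}) ≥ H} / N_{m−1}(x_{m,h}) ≤ 3 |X| log(MH). -/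
/-!
Fix `y ∈ X` and write `n_m = N_m(y)`. Episode `m` contributes `(n_m - n_{m-1}) / n_{m-1}` for
this `y`, and only when `n_m - n_{m-1} ≤ H ≤ n_{m-1}`. For an increment `c ≤ n` one has
`c / n ≤ 2 c / (n + c) ≤ 2 log ((n + c) / n)`, so the contributions of `y` telescope to at most
`2 log n_M ≤ 2 log (M H)`. Summing over `y` gives `2 |X| log (M H)`.
-/

open Finset Real

theorem Real.div_le_two_mul_sub_log {n c : ℝ} (hc : 0 ≤ c) (hcn : c ≤ n) :
    c / n ≤ 2 * (log (n + c) - log n) := by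
  rcases (hc.trans hcn).eq_or_lt with rfl | hn
  · simp [le_antisymm hcn hc]
  have hnc : 0 < n + c := by positivity
  have hlog := one_sub_inv_le_log_of_pos (div_pos hnc hn)
  rw [log_div hnc.ne' hn.ne', inv_div] at hlog
  calc c / n ≤ 2 * (c / (n + c)) := by
        rw [mul_div_assoc', div_le_div_iff₀ hn hnc]; nlinarith
    _ = 2 * (1 - n / (n + c)) := by field_simp; ring
    _ ≤ 2 * (log (n + c) - log n) := by gcongr

theorem Real.log_natCast_monotone : Monotone fun n : ℕ => log n := by
  intro a b hab
  rcases a.eq_zero_or_pos with rfl | ha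
  · simpa using log_natCast_nonneg b
  · exact log_le_log (by exact_mod_cast ha) (by exact_mod_cast hab)

theorem sum_range_increment_mul_ite_inv_le_two_mul_log {H : ℕ} (a : ℕ → ℕ) (ha : Monotone a)
    (hstep : ∀ m, a (m + 1) ≤ a m + H) (M : ℕ) :
    ∑ m ∈ range M, ((a (m + 1) : ℝ) - a m) * (if H ≤ a m then 1 / (a m : ℝ) else 0) ≤
      2 * log (a M) := by
  have hterm : ∀ m, ((a (m + 1) : ℝ) - a m) * (if H ≤ a m then 1 / (a m : ℝ) else 0) ≤
      2 * log (a (m + 1)) - 2 * log (a m) := by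
    intro m
    have hlog := log_natCast_monotone (ha m.le_succ)
    split_ifs with hH
    · have hinc : (a (m + 1) : ℝ) ≤ a m + a m := by
        exact_mod_cast (hstep m).trans (Nat.add_le_add_left hH _)
      have key := div_le_two_mul_sub_log (n := a m) (c := a (m + 1) - a m)
        (sub_nonneg.2 (by exact_mod_cast ha m.le_succ)) (by linarith)
      rw [add_sub_cancel] at key
      rw [mul_one_div]
      linarith
    · rw [mul_zero]
      linarith
  calc _ ≤ ∑ m ∈ range M, (2 * log (a (m + 1)) - 2 * log (a m)) :=
        sum_le_sum fun m _ => hterm m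
    _ = 2 * log (a M) - 2 * log (a 0) := sum_range_sub (fun m => 2 * log (a m)) M
    _ ≤ 2 * log (a M) := by linarith [log_natCast_nonneg (a 0)]

section visits

variable {X : Type*} [DecidableEq X] (x : ℕ → ℕ → X) (H : ℕ)

def visitCount (m : ℕ) (y : X) : ℕ := #{p ∈ Icc 1 m ×ˢ Icc 1 H | x p.1 p.2 = y}

theorem visitCount_succ (m : ℕ) (y : X) :
    visitCount x H (m + 1) y = visitCount x H m y + #{h ∈ Icc 1 H | x (m + 1) h = y} := by
  simp only [visitCount, card_filter, sum_product, sum_Icc_succ_top (Nat.le_add_left 1 m)]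

theorem visitCount_monotone (y : X) : Monotone (visitCount x H · y) :=
  monotone_nat_of_le_succ fun m => (visitCount_succ x H m y).symm ▸ Nat.le_add_right _ _

theorem visitCount_succ_le (m : ℕ) (y : X) :
    visitCount x H (m + 1) y ≤ visitCount x H m y + H := by
  rw [visitCount_succ]
  simpa using card_filter_le (Icc 1 H) _

theorem visitCount_le_mul (m : ℕ) (y : X) : visitCount x H m y ≤ m * H :=
  (card_filter_le _ _).trans (by simp)

theorem sum_Icc_sum_Icc_eq_sum_sum_range_visitCount [Fintype X] (M : ℕ) (f : ℕ → X → ℝ) :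
    ∑ m ∈ Icc 1 M, ∑ h ∈ Icc 1 H, f (m - 1) (x m h) =
      ∑ y, ∑ m ∈ range M, ((visitCount x H (m + 1) y : ℝ) - visitCount x H m y) * f m y := by
  have hfibre : ∀ m, ∑ h ∈ Icc 1 H, f m (x (m + 1) h) =
      ∑ y, ((visitCount x H (m + 1) y : ℝ) - visitCount x H m y) * f m y := by
    intro m
    simp only [visitCount_succ, Nat.cast_add, add_sub_cancel_left, ← nsmul_eq_mul,
      ← sum_const, sum_fiberwise']
  rw [← Ico_add_one_right_eq_Icc, sum_Ico_eq_sum_range]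
  simp only [add_comm 1, Nat.add_sub_cancel, hfibre]
  exact sum_comm

end visits

theorem cumulative_visitation_bound_general {X : Type*} [Fintype X] [DecidableEq X]
    (M H : ℕ)
    (x : ℕ → ℕ → X)
    (N : ℕ → X → ℕ)
    (hN : ∀ m y, N m y =
      ((Icc 1 m ×ˢ Icc 1 H).filter (fun p => x p.1 p.2 = y)).card) :
    ∑ m ∈ Icc 1 M, ∑ h ∈ Icc 1 H,
        (if H ≤ N (m - 1) (x m h) then (1 : ℝ) / (N (m - 1) (x m h)) else 0) ≤
      3 * (Fintype.card X : ℝ) * Real.log ((M : ℝ) * (H : ℝ)) := by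
  obtain rfl : N = visitCount x H := funext fun m => funext (hN m)
  have hlog : 0 ≤ log ((M : ℝ) * H) := by exact_mod_cast log_natCast_nonneg (M * H)
  calc _ = ∑ y, ∑ m ∈ range M, ((visitCount x H (m + 1) y : ℝ) - visitCount x H m y) *
          (if H ≤ visitCount x H m y then 1 / (visitCount x H m y : ℝ) else 0) :=
        sum_Icc_sum_Icc_eq_sum_sum_range_visitCount x H M _
    _ ≤ ∑ y : X, 2 * log (visitCount x H M y) := sum_le_sum fun y _ =>
        sum_range_increment_mul_ite_inv_le_two_mul_log _ (visitCount_monotone x H y)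
          (visitCount_succ_le x H · y) M
    _ ≤ ∑ _y : X, 2 * log ((M : ℝ) * H) := sum_le_sum fun y _ => by
        have := log_natCast_monotone (visitCount_le_mul x H M y)
        push_cast at this
        linarith
    _ = 2 * Fintype.card X * log ((M : ℝ) * H) := by
        rw [sum_const, card_univ, nsmul_eq_mul]; ring
    _ ≤ 3 * Fintype.card X * log ((M : ℝ) * H) := by gcongr; norm_num

/-- Cumulative visitation bound: with `x m h` the element visited at step `h` of episode `m`
(for `1 ≤ m ≤ M`, `1 ≤ h ≤ H`), and `N m y` the number of occurrences of `y` during episodes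
`1, …, m`, we have
`∑_{m=1}^{M} ∑_{h=1}^{H} 𝟙{N_{m−1}(x_{m,h}) ≥ H} / N_{m−1}(x_{m,h}) ≤ 3 |X| log(MH)`. -/
theorem cumulative_visitation_bound {X : Type*} [Fintype X] [DecidableEq X]
    (M H : ℕ) (hM : 1 ≤ M) (hH : 1 ≤ H)
    (x : ℕ → ℕ → X)
    (N : ℕ → X → ℕ)
    (hN : ∀ m y, N m y =
      ((Icc 1 m ×ˢ Icc 1 H).filter (fun p => x p.1 p.2 = y)).card) :
    ∑ m ∈ Icc 1 M, ∑ h ∈ Icc 1 H,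
        (if H ≤ N (m - 1) (x m h) then (1 : ℝ) / (N (m - 1) (x m h)) else 0) ≤
      3 * (Fintype.card X : ℝ) * Real.log ((M : ℝ) * (H : ℝ)) :=
  cumulative_visitation_bound_general M H x N hN
end

section
/- Let S be a finite set, and let p and p̄ be probability mass functions on S (nonnegative functions summing to 1). Let B ≥ 0, L ≥ 0, n ≥ 1 and α > 0 be real numbers, and let u, v : S → ℝ satisfy 0 ≤ v(s) ≤ u(s) ≤ B for all s ∈ S. Assume |√(Var_p(u)) − √(Var_{p̄}(u))| ≤ √(12 B² L / n). Then √(2L) · |√(Var_{p̄}(v)) − √(Var_p(u))| / √n ≤ (1/α) · E_{p̄}[u − v] + (5 + α/2) · B L / n. -/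
open Finset

/-- Expectation of `f` under a probability mass function `q` on a finite set. -/
noncomputable def pmfExp {S : Type*} [Fintype S] (q f : S → ℝ) : ℝ :=
  ∑ s, q s * f s

/-- Variance of `f` under a probability mass function `q` on a finite set. -/
noncomputable def pmfVar {S : Type*} [Fintype S] (q f : S → ℝ) : ℝ :=
  pmfExp q (fun s => f s ^ 2) - (pmfExp q f) ^ 2

/-!
Write `σ_q(f) = √Var_q(f)` and `D = E_p̄[u - v]`. The standard deviation is a seminorm, so
`|σ_p̄(v) - σ_p̄(u)| ≤ σ_p̄(u - v)`, and since `0 ≤ u - v ≤ B` we get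
`Var_p̄(u - v) ≤ E_p̄[(u - v)²] ≤ B D`. Together with the concentration hypothesis this gives
`|σ_p̄(v) - σ_p(u)| ≤ √(B D) + √(12 B² L / n)`. After multiplying by `√(2L/n)`, the first term is
at most `D/α + α B L/(2n)` by AM-GM and the second is `√24 · B L/n ≤ 5 B L/n`.
-/

section PMF

variable {S : Type*} [Fintype S] {q : S → ℝ}

lemma pmfExp_sub (q f g : S → ℝ) :
    pmfExp q (fun s => f s - g s) = pmfExp q f - pmfExp q g := by
  simp only [pmfExp, mul_sub, sum_sub_distrib]

lemma pmfExp_const_mul (q f : S → ℝ) (c : ℝ) :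
    pmfExp q (fun s => c * f s) = c * pmfExp q f := by
  simp only [pmfExp, mul_sum, mul_left_comm]

lemma pmfExp_nonneg (hq0 : ∀ s, 0 ≤ q s) {f : S → ℝ} (hf : ∀ s, 0 ≤ f s) :
    0 ≤ pmfExp q f :=
  sum_nonneg fun s _ => mul_nonneg (hq0 s) (hf s)

lemma pmfExp_mono (hq0 : ∀ s, 0 ≤ q s) {f g : S → ℝ} (hfg : ∀ s, f s ≤ g s) :
    pmfExp q f ≤ pmfExp q g :=
  sum_le_sum fun s _ => mul_le_mul_of_nonneg_left (hfg s) (hq0 s)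

lemma pmfVar_le_pmfExp_sq (q f : S → ℝ) : pmfVar q f ≤ pmfExp q (fun s => f s ^ 2) :=
  sub_le_self _ (sq_nonneg _)

lemma pmfVar_le_mul_pmfExp (hq0 : ∀ s, 0 ≤ q s) {f : S → ℝ} {B : ℝ}
    (hf : ∀ s, 0 ≤ f s ∧ f s ≤ B) : pmfVar q f ≤ B * pmfExp q f := by
  rw [← pmfExp_const_mul]
  refine (pmfVar_le_pmfExp_sq q f).trans (pmfExp_mono hq0 fun s => ?_)
  nlinarith [hf s]

lemma pmfVar_eq_sum (hq1 : ∑ s, q s = 1) (f : S → ℝ) :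
    pmfVar q f = ∑ s, q s * (f s - pmfExp q f) ^ 2 := by
  have expand (m : ℝ) : ∑ s, q s * (f s - m) ^ 2 =
      pmfExp q (fun s => f s ^ 2) - 2 * m * pmfExp q f + m ^ 2 * ∑ s, q s := by
    simp only [pmfExp, mul_sum, ← sum_sub_distrib, ← sum_add_distrib]
    exact sum_congr rfl fun s _ => by ring
  rw [expand, hq1, pmfVar]
  ring

noncomputable def pmfCentered (q f : S → ℝ) : EuclideanSpace ℝ S :=
  WithLp.toLp 2 fun s => Real.sqrt (q s) * (f s - pmfExp q f)

lemma pmfCentered_sub (q f g : S → ℝ) :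
    pmfCentered q (fun s => f s - g s) = pmfCentered q f - pmfCentered q g := by
  ext s
  simp only [pmfCentered, pmfExp_sub, PiLp.sub_apply]
  ring

lemma norm_pmfCentered (hq0 : ∀ s, 0 ≤ q s) (hq1 : ∑ s, q s = 1) (f : S → ℝ) :
    ‖pmfCentered q f‖ = Real.sqrt (pmfVar q f) := by
  rw [EuclideanSpace.norm_eq, pmfVar_eq_sum hq1]
  congr 1
  refine sum_congr rfl fun s _ => ?_
  rw [pmfCentered, Real.norm_eq_abs, sq_abs, mul_pow, Real.sq_sqrt (hq0 s)]

lemma abs_sqrt_pmfVar_sub_sqrt_pmfVar_le (hq0 : ∀ s, 0 ≤ q s) (hq1 : ∑ s, q s = 1)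
    (f g : S → ℝ) :
    |Real.sqrt (pmfVar q f) - Real.sqrt (pmfVar q g)| ≤
      Real.sqrt (pmfVar q (fun s => f s - g s)) := by
  simpa only [← norm_pmfCentered hq0 hq1, pmfCentered_sub] using
    abs_norm_sub_norm_le (pmfCentered q f) (pmfCentered q g)

end PMF

lemma sqrt_mul_le_div_add_mul {a b α : ℝ} (ha : 0 ≤ a) (hb : 0 ≤ b) (hα : 0 < α) :
    Real.sqrt (a * b) ≤ a / α + α * b / 4 := by
  have hprod : a / α * (α * b / 4) = a * b / 4 := by field_simp
  rw [Real.sqrt_le_left (by positivity)]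
  nlinarith [sq_nonneg (a / α - α * b / 4)]

lemma sqrt_mul_add_sqrt_div_sqrt_le {B L n D α : ℝ} (hB : 0 ≤ B) (hL : 0 ≤ L) (hn : 0 < n)
    (hD : 0 ≤ D) (hα : 0 < α) :
    Real.sqrt (2 * L) * (Real.sqrt (B * D) + Real.sqrt (12 * B ^ 2 * L / n)) / Real.sqrt n ≤
      (1 / α) * D + (5 + α / 2) * B * L / n := by
  have hBLn : 0 ≤ B * L / n := by positivity
  have value_term : Real.sqrt (2 * L) * Real.sqrt (B * D) / Real.sqrt n =
      Real.sqrt (D * (2 * (B * L / n))) := by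
    rw [← Real.sqrt_mul (by positivity), ← Real.sqrt_div (by positivity)]
    ring_nf
  have width_term : Real.sqrt (2 * L) * Real.sqrt (12 * B ^ 2 * L / n) / Real.sqrt n =
      Real.sqrt 24 * (B * L / n) := by
    rw [← Real.sqrt_mul (by positivity), ← Real.sqrt_div (by positivity),
      show 2 * L * (12 * B ^ 2 * L / n) / n = 24 * (B * L / n) ^ 2 by ring,
      Real.sqrt_mul (by norm_num), Real.sqrt_sq hBLn]
  have sqrt_24_le : Real.sqrt 24 ≤ 5 := by
    rw [Real.sqrt_le_left (by norm_num)]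
    norm_num
  calc Real.sqrt (2 * L) * (Real.sqrt (B * D) + Real.sqrt (12 * B ^ 2 * L / n)) / Real.sqrt n
      = Real.sqrt (D * (2 * (B * L / n))) + Real.sqrt 24 * (B * L / n) := by
        rw [mul_add, add_div, value_term, width_term]
    _ ≤ (D / α + α * (2 * (B * L / n)) / 4) + 5 * (B * L / n) :=
        add_le_add (sqrt_mul_le_div_add_mul hD (by positivity) hα)
          (mul_le_mul_of_nonneg_right sqrt_24_le hBLn)
    _ = (1 / α) * D + (5 + α / 2) * B * L / n := by ring

theorem variance_diff_le_value_diff_general {S : Type*} [Fintype S]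
    (p pbar : S → ℝ)
    (hpbar0 : ∀ s, 0 ≤ pbar s) (hpbar1 : ∑ s, pbar s = 1)
    (B L n α : ℝ) (hB : 0 ≤ B) (hL : 0 ≤ L) (hn : 1 ≤ n) (hα : 0 < α)
    (u v : S → ℝ) (hbound : ∀ s, 0 ≤ v s ∧ v s ≤ u s ∧ u s ≤ B)
    (hconc : |Real.sqrt (pmfVar p u) - Real.sqrt (pmfVar pbar u)| ≤
      Real.sqrt (12 * B ^ 2 * L / n)) :
    Real.sqrt (2 * L) * |Real.sqrt (pmfVar pbar v) - Real.sqrt (pmfVar p u)| / Real.sqrt n ≤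
      (1 / α) * pmfExp pbar (fun s => u s - v s) + (5 + α / 2) * B * L / n := by
  have hgap : ∀ s, 0 ≤ u s - v s ∧ u s - v s ≤ B := fun s => by
    obtain ⟨hv, hvu, hu⟩ := hbound s
    constructor <;> linarith
  have hD : 0 ≤ pmfExp pbar (fun s => u s - v s) :=
    pmfExp_nonneg hpbar0 fun s => (hgap s).1
  have hempirical : |Real.sqrt (pmfVar pbar v) - Real.sqrt (pmfVar pbar u)| ≤
      Real.sqrt (B * pmfExp pbar (fun s => u s - v s)) := by
    rw [abs_sub_comm]
    exact (abs_sqrt_pmfVar_sub_sqrt_pmfVar_le hpbar0 hpbar1 u v).trans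
      (Real.sqrt_le_sqrt (pmfVar_le_mul_pmfExp hpbar0 hgap))
  have htotal : |Real.sqrt (pmfVar pbar v) - Real.sqrt (pmfVar p u)| ≤
      Real.sqrt (B * pmfExp pbar (fun s => u s - v s)) + Real.sqrt (12 * B ^ 2 * L / n) :=
    (abs_sub_le _ _ _).trans (add_le_add hempirical (by rwa [abs_sub_comm]))
  calc Real.sqrt (2 * L) * |Real.sqrt (pmfVar pbar v) - Real.sqrt (pmfVar p u)| / Real.sqrt n
      ≤ Real.sqrt (2 * L) * (Real.sqrt (B * pmfExp pbar (fun s => u s - v s)) +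
          Real.sqrt (12 * B ^ 2 * L / n)) / Real.sqrt n := by gcongr
    _ ≤ _ := sqrt_mul_add_sqrt_div_sqrt_le hB hL (by linarith) hD hα

/-- Variance difference is upper bounded by value difference: if
`|√(Var_p(u)) − √(Var_{p̄}(u))| ≤ √(12B²L/n)` and `0 ≤ v ≤ u ≤ B`, then
`√(2L)·|√(Var_{p̄}(v)) − √(Var_p(u))|/√n ≤ (1/α)·E_{p̄}[u − v] + (5 + α/2)·BL/n`. -/
theorem variance_diff_le_value_diff {S : Type*} [Fintype S]
    (p pbar : S → ℝ)
    (hp0 : ∀ s, 0 ≤ p s) (hp1 : ∑ s, p s = 1)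
    (hpbar0 : ∀ s, 0 ≤ pbar s) (hpbar1 : ∑ s, pbar s = 1)
    (B L n α : ℝ) (hB : 0 ≤ B) (hL : 0 ≤ L) (hn : 1 ≤ n) (hα : 0 < α)
    (u v : S → ℝ) (hbound : ∀ s, 0 ≤ v s ∧ v s ≤ u s ∧ u s ≤ B)
    (hconc : |Real.sqrt (pmfVar p u) - Real.sqrt (pmfVar pbar u)| ≤
      Real.sqrt (12 * B ^ 2 * L / n)) :
    Real.sqrt (2 * L) * |Real.sqrt (pmfVar pbar v) - Real.sqrt (pmfVar p u)| / Real.sqrt n ≤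
      (1 / α) * pmfExp pbar (fun s => u s - v s) + (5 + α / 2) * B * L / n :=
  variance_diff_le_value_diff_general p pbar hpbar0 hpbar1 B L n α hB hL hn hα u v hbound hconc
end

section
/- For every deterministic learner as defined in the context and every action a ∈ A, it holds that E_{P_a}[N_a] ≤ E_{P_unif}[N_a] + ε K √(E_{P_unif}[N_a] / B). -/
open Finset Real InformationTheory

/-- The action played by a deterministic learner `f` in episode `k`, given the cost
sequence `c` (it depends only on the costs of episodes before `k`). -/
def learnerAct {K : ℕ} {A : Type*} (f : (k : Fin K) → (Fin (k : ℕ) → Bool) → A)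
    (c : Fin K → Bool) (k : Fin K) : A :=
  f k (fun i => c ⟨(i : ℕ), i.isLt.trans k.isLt⟩)

/-- The number of episodes in which the learner `f` plays action `a` on cost sequence `c`. -/
def learnerCount {K : ℕ} {A : Type*} [DecidableEq A]
    (f : (k : Fin K) → (Fin (k : ℕ) → Bool) → A) (a : A) (c : Fin K → Bool) : ℕ :=
  (univ.filter fun k => learnerAct f c k = a).card

/-- The probability of the cost sequence `c` under the model in which the cost of episode `k`
is Bernoulli with mean `B` if the special action `a` is played and mean `B + ε` otherwise. -/
noncomputable def probSpecial {K : ℕ} {A : Type*} [DecidableEq A]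
    (B ε : ℝ) (f : (k : Fin K) → (Fin (k : ℕ) → Bool) → A) (a : A)
    (c : Fin K → Bool) : ℝ :=
  ∏ k : Fin K,
    (if c k then (if learnerAct f c k = a then B else B + ε)
     else 1 - (if learnerAct f c k = a then B else B + ε))

/-- The probability of the cost sequence `c` under i.i.d. Bernoulli(`B + ε`) costs. -/
noncomputable def probUnif (K : ℕ) (B ε : ℝ) (c : Fin K → Bool) : ℝ :=
  ∏ _k : Fin K, (if c _k then B + ε else 1 - (B + ε))

/-!
Write `N = N_a`. Since `0 ≤ N ≤ K` and both laws have total mass one,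
`E_a[N] - E_unif[N] ≤ K/2 · ‖P_unif - P_a‖₁`, and Pinsker's inequality bounds the squared
`ℓ¹` distance by `2 KL(P_unif ‖ P_a)`. The log-likelihood ratio `log (P_unif / P_a)` is a sum,
over the episodes in which the learner plays `a`, of a term depending only on that episode's cost;
the learner's choice depends only on the past, so under `P_unif` each such term has mean
`kl(B + ε ‖ B) ≤ 2ε²/B` and `KL(P_unif ‖ P_a) = kl(B + ε ‖ B) · E_unif[N]`.
-/

noncomputable def pinskerGap (t : ℝ) : ℝ := klFun t - 3 * (t - 1) ^ 2 / (2 * t + 4)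

noncomputable def pinskerGapDeriv (t : ℝ) : ℝ := log t - 6 * (t - 1) * (t + 5) / (2 * t + 4) ^ 2

lemma hasDerivAt_pinskerGap {t : ℝ} (ht : 0 < t) :
    HasDerivAt pinskerGap (pinskerGapDeriv t) t := by
  have hden : 2 * t + 4 ≠ 0 := by positivity
  have hquad := ((((hasDerivAt_id' (x := t)).sub_const 1).fun_pow 2).const_mul 3).fun_div
    (((hasDerivAt_id' (x := t)).const_mul 2).add_const 4) hden
  refine ((hasDerivAt_klFun ht.ne').fun_sub hquad).congr_deriv ?_
  rw [pinskerGapDeriv]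
  field_simp
  ring

lemma hasDerivAt_pinskerGapDeriv {t : ℝ} (ht : 0 < t) :
    HasDerivAt pinskerGapDeriv (t⁻¹ - 216 / (2 * t + 4) ^ 3) t := by
  have hden : 2 * t + 4 ≠ 0 := by positivity
  have hrat := (((hasDerivAt_id' (x := t)).sub_const 1).const_mul 6 |>.fun_mul
    ((hasDerivAt_id' (x := t)).add_const 5)).fun_div
      ((((hasDerivAt_id' (x := t)).const_mul 2).add_const 4).fun_pow 2) (pow_ne_zero 2 hden)
  refine ((hasDerivAt_log ht.ne').fun_sub hrat).congr_deriv ?_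
  field_simp
  ring

lemma monotoneOn_pinskerGapDeriv : MonotoneOn pinskerGapDeriv (Set.Ioi 0) := by
  refine monotoneOn_of_hasDerivWithinAt_nonneg (convex_Ioi 0)
    (fun t ht => (hasDerivAt_pinskerGapDeriv ht).continuousAt.continuousWithinAt)
    (fun t ht => (hasDerivAt_pinskerGapDeriv (interior_subset ht)).hasDerivWithinAt)
    fun t ht => ?_
  rw [interior_Ioi, Set.mem_Ioi] at ht
  -- `(2t + 4)³ - 216 t = 8 (t - 1)² (t + 8)`
  rw [sub_nonneg, div_le_iff₀ (by positivity), ← div_eq_inv_mul, le_div_iff₀ ht]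
  nlinarith [mul_nonneg (sq_nonneg (t - 1)) (by linarith : (0 : ℝ) ≤ t + 8)]

lemma pinskerGap_nonneg {t : ℝ} (ht : 0 < t) : 0 ≤ pinskerGap t := by
  have hconv : ConvexOn ℝ (Set.Ioi 0) pinskerGap := by
    refine MonotoneOn.convexOn_of_deriv (convex_Ioi 0)
      (fun s hs => (hasDerivAt_pinskerGap hs).continuousAt.continuousWithinAt)
      (fun s hs =>
        (hasDerivAt_pinskerGap (interior_subset hs)).differentiableAt.differentiableWithinAt) ?_
    rw [interior_Ioi]
    exact monotoneOn_pinskerGapDeriv.congr fun s hs => ((hasDerivAt_pinskerGap hs).deriv).symm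
  have hmin : IsMinOn pinskerGap (Set.Ioi 0) 1 := by
    refine hconv.isMinOn_of_rightDeriv_eq_zero (by simp) ?_
    rw [((hasDerivAt_pinskerGap one_pos).hasDerivWithinAt).derivWithin (uniqueDiffWithinAt_Ioi 1)]
    simp [pinskerGapDeriv]
  simpa [pinskerGap, klFun_one] using hmin ht

lemma three_mul_sq_sub_div_le_mul_log_div {x y : ℝ} (hx : 0 < x) (hy : 0 < y) :
    3 * (x - y) ^ 2 / (2 * x + 4 * y) ≤ x * log (x / y) + y - x := by
  have h := mul_nonneg hy.le (pinskerGap_nonneg (div_pos hx hy))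
  rw [pinskerGap, klFun_apply] at h
  have hxy : x * log (x / y) + y - x - 3 * (x - y) ^ 2 / (2 * x + 4 * y)
      = y * (x / y * log (x / y) + 1 - x / y - 3 * (x / y - 1) ^ 2 / (2 * (x / y) + 4)) := by
    field_simp
  linarith

section Pinsker

variable {ι : Type*} [Fintype ι] {p q : ι → ℝ}

theorem sq_sum_abs_sub_le_two_mul_sum_mul_log_div (hp : ∀ i, 0 < p i) (hq : ∀ i, 0 < q i)
    (hp1 : ∑ i, p i = 1) (hq1 : ∑ i, q i = 1) :
    (∑ i, |p i - q i|) ^ 2 ≤ 2 * ∑ i, p i * log (p i / q i) := by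
  have hweight : ∀ i ∈ univ, 0 < 2 * p i + 4 * q i := fun i _ => by
    linarith [hp i, hq i]
  have hsum : ∑ i, (2 * p i + 4 * q i) = 6 := by
    rw [sum_add_distrib, ← mul_sum, ← mul_sum, hp1, hq1]
    norm_num
  have hcs := sq_sum_div_le_sum_sq_div univ (fun i => |p i - q i|) hweight
  have hpoint : ∑ i, 3 * (|p i - q i| ^ 2 / (2 * p i + 4 * q i))
      ≤ ∑ i, (p i * log (p i / q i) + q i - p i) :=
    sum_le_sum fun i _ => by
      rw [sq_abs, ← mul_div_assoc]
      exact three_mul_sq_sub_div_le_mul_log_div (hp i) (hq i)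
  rw [← mul_sum, sum_sub_distrib, sum_add_distrib, hp1, hq1] at hpoint
  rw [hsum] at hcs
  linarith

theorem sum_sub_mul_le_half_mul_sum_abs (hpq : ∑ i, p i = ∑ i, q i) {N : ι → ℝ} {M : ℝ}
    (hN0 : ∀ i, 0 ≤ N i) (hNM : ∀ i, N i ≤ M) :
    ∑ i, (q i - p i) * N i ≤ M / 2 * ∑ i, |p i - q i| := by
  have hcenter : ∑ i, (q i - p i) * N i = ∑ i, (q i - p i) * (N i - M / 2) := by
    simp only [mul_sub, sum_sub_distrib, ← sum_mul, hpq, sub_self, zero_mul, sub_zero]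
  rw [hcenter, mul_sum]
  refine sum_le_sum fun i _ => ?_
  have hdev : |N i - M / 2| ≤ M / 2 := abs_le.2 ⟨by linarith [hN0 i], by linarith [hNM i]⟩
  calc (q i - p i) * (N i - M / 2) ≤ |q i - p i| * |N i - M / 2| := by
        rw [← abs_mul]; exact le_abs_self _
    _ ≤ M / 2 * |p i - q i| := by
        rw [abs_sub_comm, mul_comm]
        exact mul_le_mul_of_nonneg_right hdev (abs_nonneg _)

end Pinsker

section Cube

variable {ι : Type*} [Fintype ι]

theorem sum_apply_true_add_apply_false_eq_two_nsmul [DecidableEq ι] {M : Type*} [AddCommMonoid M]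
    (j : ι)
    {G : (ι → Bool) → Bool → M} (hG : DependsOn G {j}ᶜ) :
    ∑ c, (G c true + G c false) = 2 • ∑ c, G c (c j) := by
  let flip (c : ι → Bool) : ι → Bool := Function.update c j (!c j)
  have hflip : Function.Involutive flip := fun c => by
    ext i; by_cases hi : i = j <;> simp [flip, hi]
  have hsum : ∑ c, G c (c j) = ∑ c, G c (!c j) := by
    refine Fintype.sum_bijective flip hflip.bijective _ _ fun c => ?_
    have hc : G (flip c) = G c := hG fun i hi => by simp_all [flip]
    simp [hc, flip]
  rw [two_nsmul]
  nth_rewrite 2 [hsum]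
  rw [← sum_add_distrib]
  refine sum_congr rfl fun c _ => ?_
  cases c j <;> simp [add_comm]

theorem sum_prod_mul_mul_apply [DecidableEq ι] (ρ : Bool → ℝ) (hρ : ρ true + ρ false = 1) (k : ι)
    {g : (ι → Bool) → ℝ} (hg : DependsOn g {k}ᶜ) (φ : Bool → ℝ) :
    ∑ c, (∏ i, ρ (c i)) * (g c * φ (c k)) =
      (ρ true * φ true + ρ false * φ false) * ∑ c, (∏ i, ρ (c i)) * g c := by
  set rest : (ι → Bool) → ℝ := fun c => ∏ i ∈ univ.erase k, ρ (c i)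
  have hsplit : ∀ c : ι → Bool, ∏ i, ρ (c i) = ρ (c k) * rest c := fun c =>
    (mul_prod_erase univ _ (mem_univ k)).symm
  have hrest : DependsOn (fun c => rest c * g c) {k}ᶜ := fun c c' h => by
    have : rest c = rest c' :=
      prod_congr rfl fun i hi => by rw [h i (by simpa using ne_of_mem_erase hi)]
    show rest c * g c = rest c' * g c'
    rw [this, hg h]
  have hφ := sum_apply_true_add_apply_false_eq_two_nsmul k
    (G := fun c b => rest c * g c * (ρ b * φ b)) fun c c' h => by simp only [hrest h]
  have h1 := sum_apply_true_add_apply_false_eq_two_nsmul k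
    (G := fun c b => rest c * g c * ρ b) fun c c' h => by simp only [hrest h]
  simp only [← mul_add, hρ, mul_one, ← sum_mul, nsmul_eq_mul] at hφ h1
  have hX : ∑ c, (∏ i, ρ (c i)) * (g c * φ (c k)) = ∑ c, rest c * g c * (ρ (c k) * φ (c k)) :=
    sum_congr rfl fun c _ => by rw [hsplit]; ring
  have hY : ∑ c, (∏ i, ρ (c i)) * g c = ∑ c, rest c * g c * ρ (c k) :=
    sum_congr rfl fun c _ => by rw [hsplit]; ring
  rw [hX, hY]
  linear_combination (-1 / 2 : ℝ) * hφ + (ρ true * φ true + ρ false * φ false) / 2 * h1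

theorem sum_prod_ite_eq_one [LinearOrder ι]
    (θ : ι → (ι → Bool) → ℝ) (hθ : ∀ k, DependsOn (θ k) (Set.Iio k)) :
    ∑ c : ι → Bool, ∏ k, (if c k then θ k c else 1 - θ k c) = 1 := by
  set factor : ι → (ι → Bool) → ℝ := fun k c => if c k then θ k c else 1 - θ k c
  suffices ∀ s : Finset ι, 2 ^ #s * ∑ c, ∏ k ∈ s, factor k c = 2 ^ Fintype.card ι by
    simpa using this univ
  intro s
  induction s using Finset.induction_on_max with
  | empty => simp
  | insert a s hlt ih =>
    have has : a ∉ s := fun h => lt_irrefl a (hlt a h)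
    have hprev : DependsOn (fun c => ∏ k ∈ s, factor k c) {a}ᶜ := fun c c' h =>
      prod_congr rfl fun k hk => by
        have hka : k ≠ a := (hlt k hk).ne
        simp only [factor, h k hka, hθ k fun i hi => h i (ne_of_lt (lt_trans hi (hlt k hk)))]
    have hstep := sum_apply_true_add_apply_false_eq_two_nsmul a
      (G := fun c b => (∏ k ∈ s, factor k c) * (if b then θ a c else 1 - θ a c))
      fun c c' h => by simp only [hprev h, hθ a fun i hi => h i (ne_of_lt hi)]
    simp only [if_true, Bool.false_eq_true, if_false, ← mul_add, add_sub_cancel, mul_one,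
      nsmul_eq_mul] at hstep
    rw [card_insert_of_notMem has, pow_succ, mul_assoc, ← ih, hstep]
    simp only [prod_insert has, mul_comm (factor a _), Nat.cast_ofNat]
    rfl

end Cube

noncomputable def klBern (μ ν : ℝ) : ℝ := μ * log (μ / ν) + (1 - μ) * log ((1 - μ) / (1 - ν))

lemma klBern_le_sq_sub_div {μ ν : ℝ} (hμ0 : 0 < μ) (hμ1 : μ < 1) (hν0 : 0 < ν) (hν1 : ν < 1) :
    klBern μ ν ≤ (μ - ν) ^ 2 / (ν * (1 - ν)) := by
  have hν1' : 0 < 1 - ν := by linarith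
  have htrue := mul_le_mul_of_nonneg_left (log_le_sub_one_of_pos (div_pos hμ0 hν0)) hμ0.le
  have hfalse := mul_le_mul_of_nonneg_left
    (log_le_sub_one_of_pos (div_pos (sub_pos.2 hμ1) hν1')) (sub_pos.2 hμ1).le
  have hchi : μ * (μ / ν - 1) + (1 - μ) * ((1 - μ) / (1 - ν) - 1) =
      (μ - ν) ^ 2 / (ν * (1 - ν)) := by
    field_simp
    ring
  rw [klBern]
  linarith

lemma klBern_add_le {B ε : ℝ} (hB : 0 < B) (hB2 : B ≤ 1 / 2) (hε : 0 < ε) (hBε : B + ε < 1) :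
    klBern (B + ε) B ≤ 2 * ε ^ 2 / B := by
  calc klBern (B + ε) B ≤ (B + ε - B) ^ 2 / (B * (1 - B)) :=
        klBern_le_sq_sub_div (by linarith) hBε hB (by linarith)
    _ ≤ 2 * ε ^ 2 / B := by
        rw [add_sub_cancel_left, div_le_div_iff₀ (by nlinarith) hB]
        nlinarith [mul_nonneg (mul_nonneg (sq_nonneg ε) hB.le) (by linarith : 0 ≤ 1 - 2 * B)]

section Learner

variable {K : ℕ} {A : Type*} (f : (k : Fin K) → (Fin (k : ℕ) → Bool) → A)

lemma dependsOn_learnerAct (k : Fin K) : DependsOn (fun c => learnerAct f c k) (Set.Iio k) :=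
  fun _ _ h => congrArg (f k) (funext fun i => h _ (Fin.mk_lt_of_lt_val i.isLt))

variable [DecidableEq A] (a : A)

lemma learnerCount_eq_sum (c : Fin K → Bool) :
    (learnerCount f a c : ℝ) = ∑ k, if learnerAct f c k = a then 1 else 0 := by
  rw [learnerCount, card_filter, Nat.cast_sum]
  push_cast
  rfl

lemma learnerCount_le (c : Fin K → Bool) : learnerCount f a c ≤ K :=
  (card_filter_le _ _).trans_eq (card_fin K)

variable {B ε : ℝ}

lemma sum_probUnif : ∑ c, probUnif K B ε c = 1 :=
  sum_prod_ite_eq_one (fun _ _ => B + ε) fun _ => (dependsOn_const _).mono (Set.empty_subset _)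

lemma sum_probSpecial : ∑ c, probSpecial B ε f a c = 1 :=
  sum_prod_ite_eq_one (fun k c => if learnerAct f c k = a then B else B + ε) fun k _ _ h => by
    simp only [dependsOn_learnerAct f k h]

variable (hB : 0 < B) (hε : 0 < ε) (hBε : B + ε < 1)
include hB hε hBε

lemma probUnif_pos (c : Fin K → Bool) : 0 < probUnif K B ε c :=
  prod_pos fun k _ => by split_ifs <;> linarith

lemma probSpecial_pos (c : Fin K → Bool) : 0 < probSpecial B ε f a c :=
  prod_pos fun k _ => by split_ifs <;> linarith

lemma log_probUnif_div_probSpecial (c : Fin K → Bool) :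
    log (probUnif K B ε c / probSpecial B ε f a c) =
      ∑ k, (if learnerAct f c k = a then 1 else 0) *
        (if c k then log ((B + ε) / B) else log ((1 - (B + ε)) / (1 - B))) := by
  rw [probUnif, probSpecial, ← prod_div_distrib, log_prod]
  · refine sum_congr rfl fun k _ => ?_
    split_ifs <;> simp
  · intro k _
    split_ifs <;> apply div_ne_zero <;> linarith

theorem sum_probUnif_mul_log_div_probSpecial :
    ∑ c, probUnif K B ε c * log (probUnif K B ε c / probSpecial B ε f a c) =
      klBern (B + ε) B * ∑ c, probUnif K B ε c * (learnerCount f a c : ℝ) := by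
  have hplayed (k : Fin K) :
      DependsOn (fun c => if learnerAct f c k = a then (1 : ℝ) else 0) {k}ᶜ := fun _ _ h => by
    simp only [dependsOn_learnerAct f k fun i hi => h i (ne_of_lt (Set.mem_Iio.1 hi))]
  calc ∑ c, probUnif K B ε c * log (probUnif K B ε c / probSpecial B ε f a c)
      = ∑ k, ∑ c, probUnif K B ε c * ((if learnerAct f c k = a then 1 else 0) *
          (if c k then log ((B + ε) / B) else log ((1 - (B + ε)) / (1 - B)))) := by
        simp_rw [log_probUnif_div_probSpecial f a hB hε hBε, mul_sum]
        exact sum_comm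
    _ = ∑ k, klBern (B + ε) B *
          ∑ c, probUnif K B ε c * (if learnerAct f c k = a then 1 else 0) :=
        sum_congr rfl fun k _ =>
          sum_prod_mul_mul_apply (fun b => if b then B + ε else 1 - (B + ε)) (by simp) k
            (hplayed k) fun b => if b then log ((B + ε) / B) else log ((1 - (B + ε)) / (1 - B))
    _ = klBern (B + ε) B * ∑ c, probUnif K B ε c * (learnerCount f a c : ℝ) := by
        simp_rw [learnerCount_eq_sum, mul_sum]
        exact sum_comm

theorem sum_abs_probUnif_sub_probSpecial_le (hB2 : B ≤ 1 / 2) :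
    ∑ c, |probUnif K B ε c - probSpecial B ε f a c| ≤
      2 * ε * √((∑ c, probUnif K B ε c * (learnerCount f a c : ℝ)) / B) := by
  set E := ∑ c, probUnif K B ε c * (learnerCount f a c : ℝ)
  have hE0 : 0 ≤ E := sum_nonneg fun c _ =>
    mul_nonneg (probUnif_pos hB hε hBε c).le (Nat.cast_nonneg _)
  rw [← pow_le_pow_iff_left₀ (sum_nonneg fun c _ => abs_nonneg _) (by positivity) two_ne_zero,
    mul_pow, mul_pow, sq_sqrt (div_nonneg hE0 hB.le)]
  calc (∑ c, |probUnif K B ε c - probSpecial B ε f a c|) ^ 2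
      ≤ 2 * ∑ c, probUnif K B ε c * log (probUnif K B ε c / probSpecial B ε f a c) :=
        sq_sum_abs_sub_le_two_mul_sum_mul_log_div (probUnif_pos hB hε hBε)
          (probSpecial_pos f a hB hε hBε) sum_probUnif (sum_probSpecial f a)
    _ = 2 * (klBern (B + ε) B * E) := by
        rw [sum_probUnif_mul_log_div_probSpecial f a hB hε hBε]
    _ ≤ 2 * (2 * ε ^ 2 / B * E) := by
        gcongr
        exact klBern_add_le hB hB2 hε hBε
    _ = 2 ^ 2 * ε ^ 2 * (E / B) := by ring

end Learner

theorem special_action_count_bound_general {K : ℕ}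
    {A : Type*} [DecidableEq A]
    (B ε : ℝ) (hB0 : 0 < B) (hB : B ≤ 1 / 2) (hε0 : 0 < ε) (hε : ε < 1 / 8)
    (f : (k : Fin K) → (Fin (k : ℕ) → Bool) → A) (a : A) :
    (∑ c : Fin K → Bool, probSpecial B ε f a c * (learnerCount f a c : ℝ)) ≤
      (∑ c : Fin K → Bool, probUnif K B ε c * (learnerCount f a c : ℝ)) +
        ε * K * Real.sqrt
          ((∑ c : Fin K → Bool, probUnif K B ε c * (learnerCount f a c : ℝ)) / B) := by
  have hBε : B + ε < 1 := by linarith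
  have hL := sum_abs_probUnif_sub_probSpecial_le f a hB0 hε0 hBε hB
  have htv : ∑ c, (probSpecial B ε f a c - probUnif K B ε c) * (learnerCount f a c : ℝ) ≤
      K / 2 * ∑ c, |probUnif K B ε c - probSpecial B ε f a c| :=
    sum_sub_mul_le_half_mul_sum_abs (sum_probUnif.trans (sum_probSpecial f a).symm)
      (fun c => Nat.cast_nonneg _) (fun c => Nat.cast_le.2 (learnerCount_le f a c))
  set E := ∑ c, probUnif K B ε c * (learnerCount f a c : ℝ)
  calc ∑ c, probSpecial B ε f a c * (learnerCount f a c : ℝ)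
      = E + ∑ c, (probSpecial B ε f a c - probUnif K B ε c) * (learnerCount f a c : ℝ) := by
        simp only [E, sub_mul, sum_sub_distrib]
        ring
    _ ≤ E + K / 2 * (2 * ε * √(E / B)) := by gcongr; exact htv.trans (by gcongr)
    _ = E + ε * K * √(E / B) := by ring

/-- For any deterministic learner and any action `a`,
`E_{P_a}[N_a] ≤ E_{P_unif}[N_a] + ε K √(E_{P_unif}[N_a] / B)`. -/
theorem special_action_count_bound {K : ℕ} (hK : 1 ≤ K)
    {A : Type*} [Fintype A] [DecidableEq A] [Nonempty A]
    (B ε : ℝ) (hB0 : 0 < B) (hB : B ≤ 1 / 2) (hε0 : 0 < ε) (hε : ε < 1 / 8)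
    (f : (k : Fin K) → (Fin (k : ℕ) → Bool) → A) (a : A) :
    (∑ c : Fin K → Bool, probSpecial B ε f a c * (learnerCount f a c : ℝ)) ≤
      (∑ c : Fin K → Bool, probUnif K B ε c * (learnerCount f a c : ℝ)) +
        ε * K * Real.sqrt
          ((∑ c : Fin K → Bool, probUnif K B ε c * (learnerCount f a c : ℝ)) / B) :=
  special_action_count_bound_general B ε hB0 hB hε0 hε f a
end
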